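/- arXiv:2209.09973 — 8 statements merged into one kernel-verified Lean document; each statement's English description precedes it below -/
import Mathlib

section
/- Let s and k be coprime positive integers with s ≥ 2. For every x ∈ P, we have ⌊x/s⌋ + 1 = |⟨x⟩ ∩ E|. -/
/-- `P = P_{s,s+k}`: positive integers not expressible as `a*s + b*(s+k)`
with `a, b` nonnegative integers. -/
def Pset (s k : ℕ) : Set ℕ :=
  {x | 0 < x ∧ ¬∃ a b : ℕ, x = a * s + b * (s + k)}

/-- `E = P ∩ {1, …, s+k-1}`. -/
def Eset (s k : ℕ) : Set ℕ := {x ∈ Pset s k | x ≤ s + k - 1}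

/-- The covering relation on `E`: `x ⋖_E y` iff `y = x + s` or `y = x - k`. -/
def covE (s k : ℕ) (x y : ℕ) : Prop :=
  x ∈ Eset s k ∧ y ∈ Eset s k ∧ (y = x + s ∨ x = y + k)

/-- The order `<_E` on `E`: the transitive closure of `⋖_E`. -/
def ltE (s k : ℕ) : ℕ → ℕ → Prop := Relation.TransGen (covE s k)

/-- The covering relation on `P`: `x ⋖ y` iff `y - x ∈ {s, s+k}`. -/
def covP (s k : ℕ) (x y : ℕ) : Prop :=
  x ∈ Pset s k ∧ y ∈ Pset s k ∧ (y = x + s ∨ y = x + (s + k))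

/-- The order `<_P` on `P`: the transitive closure of `⋖`. -/
def ltP (s k : ℕ) : ℕ → ℕ → Prop := Relation.TransGen (covP s k)

/-- The order ideal `⟨x⟩ = {x - a*s - b*(s+k) : a, b ∈ ℤ_{≥0}} ∩ ℤ_{>0}`
generated by `x`. -/
def genIdeal (s k x : ℕ) : Set ℕ :=
  {y | 0 < y ∧ ∃ a b : ℕ, y + a * s + b * (s + k) = x}



/-- Frobenius-type lemma: `y + s*(s+k)` is representable for `y ≥ 1`. -/
lemma repFrob (s k : ℕ) (hs : 2 ≤ s) (hcop : Nat.Coprime s k) (y : ℕ) (hy : 0 < y) :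
    ∃ u v : ℕ, y + s * (s + k) = u * s + v * (s + k) := by
  obtain ⟨m, -, hm⟩ := Nat.exists_mul_mod_eq_one_of_coprime hcop.symm (by omega)
  set b := (m * y) % s with hb
  have hbs : b < s := Nat.mod_lt _ (by omega)
  have hkm : k * m ≡ 1 [MOD s] := by
    unfold Nat.ModEq
    rw [hm, Nat.mod_eq_of_lt (by omega)]
  have hyb : b * k ≡ y [MOD s] := by
    calc b * k ≡ m * y * k [MOD s] := Nat.ModEq.mul_right k (Nat.mod_modEq _ s)
    _ = y * (k * m) := by ring
    _ ≡ y * 1 [MOD s] := Nat.ModEq.mul_left y hkm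
    _ = y := by ring
  obtain ⟨c, hc⟩ : ∃ c, s = b + c := ⟨s - b, by omega⟩
  have H : y + c * (s + k) ≡ b * k + c * (s + k) [MOD s] := Nat.ModEq.add_right _ hyb.symm
  have H2 : b * k + c * (s + k) = s * (k + c) := by rw [hc]; ring
  have H3 : y + c * (s + k) ≡ 0 [MOD s] := by
    calc y + c * (s + k) ≡ b * k + c * (s + k) [MOD s] := H
    _ = s * (k + c) := H2
    _ ≡ 0 [MOD s] := (Nat.modEq_zero_iff_dvd).mpr ⟨k + c, rfl⟩
  obtain ⟨a, ha⟩ := (Nat.modEq_zero_iff_dvd).mp H3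
  exact ⟨a, b, by rw [show y + s * (s+k) = (y + c*(s+k)) + b*(s+k) by rw [hc]; ring, ha]; ring⟩

lemma repFrob' (s k : ℕ) (hs : 2 ≤ s) (hcop : Nat.Coprime s k) (t y : ℕ) (hy : 0 < y)
    (ht : 0 < t) : ∃ u v : ℕ, y + t * (s * (s + k)) = u * s + v * (s + k) := by
  obtain ⟨u, v, huv⟩ := repFrob s k hs hcop y hy
  obtain ⟨t', rfl⟩ : ∃ t', t = t' + 1 := ⟨t - 1, by omega⟩
  refine ⟨u, v + t' * s, ?_⟩
  zify at huv ⊢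
  linear_combination huv

/-- The key lemma: if `x - s - y` and `x - s - k - y` are both representable and
`x` is not, then `x - 2s - k - y` is representable. -/
lemma keyLemma (s k y x a b a' b' : ℕ) (hs : 2 ≤ s) (hk : 0 < k) (hcop : Nat.Coprime s k)
    (hy : 0 < y)
    (h1 : y + a * s + b * (s + k) + s = x)
    (h2 : y + a' * s + b' * (s + k) + (s + k) = x)
    (hx : ¬∃ u v : ℕ, x = u * s + v * (s + k)) :
    ∃ A B : ℕ, y + A * s + B * (s + k) + (2 * s + k) = x := by
  rcases Nat.eq_zero_or_pos a' with ha' | ha'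
  · rcases Nat.eq_zero_or_pos b with hb | hb
    · subst ha' hb
      simp only [Nat.zero_mul, Nat.add_zero, Nat.zero_add] at h1 h2
      have hnat : a * s = b' * (s + k) + k := by linarith
      have hdvd : s ∣ (b' + 1) * k := by
        have hz : (a : ℤ) * s = b' * (s + k) + k := by exact_mod_cast hnat
        have : (s : ℤ) ∣ ((b' : ℤ) + 1) * k := ⟨(a : ℤ) - b', by linear_combination -hz⟩
        exact_mod_cast this
      have hdvd2 : s ∣ b' + 1 := (Nat.Coprime.dvd_of_dvd_mul_right hcop) hdvd
      obtain ⟨t, ht⟩ := hdvd2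
      have ht1 : 0 < t := by
        rcases Nat.eq_zero_or_pos t with rfl | h
        · rw [mul_zero] at ht; omega
        · exact h
      have hxval : x = y + t * (s * (s + k)) := by
        have haeq : a = b' + t * k := by
          have h4 : a * s = (b' + t * k) * s := by
            have h5 : (b' + 1) * k = t * k * s := by rw [ht]; ring
            zify at hnat h5 ⊢
            linear_combination hnat + h5
          exact Nat.eq_of_mul_eq_mul_right (by omega) h4
        subst haeq
        have h6 : (b' + 1) * s = t * (s * s) := by rw [ht]; ring
        zify at h1 h6 ⊢
        linear_combination -h1 + h6
      exact absurd (hxval ▸ repFrob' s k hs hcop t y hy ht1) hx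
    · obtain ⟨d, rfl⟩ : ∃ d, b = d + 1 := ⟨b - 1, by omega⟩
      refine ⟨a, d, ?_⟩
      have : (d + 1) * (s + k) = d * (s + k) + (s + k) := by ring
      linarith
  · obtain ⟨c, rfl⟩ : ∃ c, a' = c + 1 := ⟨a' - 1, by omega⟩
    refine ⟨c, b', ?_⟩
    have : (c + 1) * s = c * s + s := by ring
    linarith

def Tset (s k x : ℕ) : Set ℕ :=
  {y | 0 < y ∧ y ≤ s + k - 1 ∧ ∃ a b : ℕ, y + a * s + b * (s + k) = x}

lemma T_finite (s k x : ℕ) : (Tset s k x).Finite :=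
  (Set.finite_Icc 1 (s + k - 1)).subset fun y hy => ⟨hy.1, hy.2.1⟩

lemma T_eq (s k x : ℕ) (hx : x ∈ Pset s k) :
    genIdeal s k x ∩ Eset s k = Tset s k x := by
  ext y
  simp only [Tset, genIdeal, Eset, Pset, Set.mem_inter_iff, Set.mem_setOf_eq, Set.mem_sep_iff]
  constructor
  · rintro ⟨⟨hy0, a, b, hab⟩, _, hle⟩
    exact ⟨hy0, hle, a, b, hab⟩
  · rintro ⟨hy0, hle, a, b, hab⟩
    refine ⟨⟨hy0, a, b, hab⟩, ⟨hy0, ?_⟩, hle⟩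
    rintro ⟨u, v, huv⟩
    exact hx.2 ⟨u + a, v + b, by rw [← hab, huv]; ring⟩

theorem card_ideal_inter_E (s k : ℕ) (hs : 2 ≤ s) (hk : 0 < k)
    (hcop : Nat.Coprime s k) :
    ∀ x ∈ Pset s k, x / s + 1 = (genIdeal s k x ∩ Eset s k).ncard := by
  intro x
  induction x using Nat.strong_induction_on with
  | _ x ih =>
  intro hx
  rw [T_eq s k x hx]
  obtain ⟨hx0, hxnr⟩ := hx
  have hxs : x ≠ s := fun h => hxnr ⟨1, 0, by simp [h]⟩
  have hxsk : x ≠ s + k := fun h => hxnr ⟨0, 1, by simp [h]⟩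
  have hx2sk : x ≠ 2 * s + k := fun h => hxnr ⟨1, 1, by omega⟩
  rcases lt_trichotomy x s with h | h | h
  · -- x < s
    have hsing : Tset s k x = {x} := by
      ext y
      simp only [Tset, Set.mem_setOf_eq, Set.mem_singleton_iff]
      constructor
      · rintro ⟨hy0, hle, a, b, hab⟩
        have h1 : a * s = 0 ∨ s ≤ a * s := by
          rcases Nat.eq_zero_or_pos a with rfl | ha
          · left; simp
          · right; exact Nat.le_mul_of_pos_left s ha
        have h2 : b * (s + k) = 0 ∨ s + k ≤ b * (s + k) := by
          rcases Nat.eq_zero_or_pos b with rfl | hb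
          · left; simp
          · right; exact Nat.le_mul_of_pos_left (s + k) hb
        omega
      · rintro rfl
        exact ⟨hx0, by omega, 0, 0, by simp⟩
    rw [hsing, Set.ncard_singleton]
    simp [Nat.div_eq_of_lt h]
  · exact absurd h hxs
  · rcases lt_trichotomy x (s + k) with h' | h' | h'
    · -- s < x < s + k
      have hzP : x - s ∈ Pset s k := by
        refine ⟨by omega, ?_⟩
        rintro ⟨u, v, huv⟩
        refine hxnr ⟨u + 1, v, ?_⟩
        have : (u + 1) * s = u * s + s := by ring
        omega
      have hins : Tset s k x = insert x (Tset s k (x - s)) := by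
        ext y
        simp only [Tset, Set.mem_setOf_eq, Set.mem_insert_iff]
        constructor
        · rintro ⟨hy0, hle, a, b, hab⟩
          have h2 : b * (s + k) = 0 ∨ s + k ≤ b * (s + k) := by
            rcases Nat.eq_zero_or_pos b with rfl | hb
            · left; simp
            · right; exact Nat.le_mul_of_pos_left (s + k) hb
          rcases Nat.eq_zero_or_pos a with rfl | ha
          · left; simp at hab; omega
          · right
            obtain ⟨c, rfl⟩ : ∃ c, a = c + 1 := ⟨a - 1, by omega⟩
            refine ⟨hy0, hle, c, b, ?_⟩
            have : (c + 1) * s = c * s + s := by ring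
            omega
        · rintro (rfl | ⟨hy0, hle, a, b, hab⟩)
          · exact ⟨hx0, by omega, 0, 0, by simp⟩
          · refine ⟨hy0, hle, a + 1, b, ?_⟩
            have : (a + 1) * s = a * s + s := by ring
            omega
      have hnm : x ∉ Tset s k (x - s) := by
        rintro ⟨hy0, hle, a, b, hab⟩
        omega
      rw [hins, Set.ncard_insert_of_notMem hnm (T_finite s k (x - s))]
      have ihu := ih (x - s) (by omega) hzP
      rw [T_eq s k (x - s) hzP] at ihu
      have hd1 : x / s = (x - s) / s + 1 := Nat.div_eq_sub_div (by omega) (by omega)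
      omega
    · exact absurd h' hxsk
    · -- x > s + k
      have huP : x - s ∈ Pset s k := by
        refine ⟨by omega, ?_⟩
        rintro ⟨u, v, huv⟩
        refine hxnr ⟨u + 1, v, ?_⟩
        have : (u + 1) * s = u * s + s := by ring
        omega
      have hvP : x - s - k ∈ Pset s k := by
        refine ⟨by omega, ?_⟩
        rintro ⟨u, v, huv⟩
        refine hxnr ⟨u, v + 1, ?_⟩
        have : (v + 1) * (s + k) = v * (s + k) + (s + k) := by ring
        omega
      have hUnion : Tset s k x = Tset s k (x - s) ∪ Tset s k (x - s - k) := by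
        ext y
        simp only [Tset, Set.mem_setOf_eq, Set.mem_union]
        constructor
        · rintro ⟨hy0, hle, a, b, hab⟩
          rcases Nat.eq_zero_or_pos a with rfl | ha
          · rcases Nat.eq_zero_or_pos b with rfl | hb
            · simp at hab; omega
            · right
              obtain ⟨d, rfl⟩ : ∃ d, b = d + 1 := ⟨b - 1, by omega⟩
              refine ⟨hy0, hle, 0, d, ?_⟩
              have : (d + 1) * (s + k) = d * (s + k) + (s + k) := by ring
              omega
          · left
            obtain ⟨c, rfl⟩ : ∃ c, a = c + 1 := ⟨a - 1, by omega⟩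
            refine ⟨hy0, hle, c, b, ?_⟩
            have : (c + 1) * s = c * s + s := by ring
            omega
        · rintro (⟨hy0, hle, a, b, hab⟩ | ⟨hy0, hle, a, b, hab⟩)
          · refine ⟨hy0, hle, a + 1, b, ?_⟩
            have : (a + 1) * s = a * s + s := by ring
            omega
          · refine ⟨hy0, hle, a, b + 1, ?_⟩
            have : (b + 1) * (s + k) = b * (s + k) + (s + k) := by ring
            omega
      have hcard := Set.ncard_union_add_ncard_inter (Tset s k (x - s)) (Tset s k (x - s - k))
        (T_finite s k (x - s)) (T_finite s k (x - s - k))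
      have ihu := ih (x - s) (by omega) huP
      rw [T_eq s k (x - s) huP] at ihu
      have ihv := ih (x - s - k) (by omega) hvP
      rw [T_eq s k (x - s - k) hvP] at ihv
      have hd1 : x / s = (x - s) / s + 1 := Nat.div_eq_sub_div (by omega) (by omega)
      rcases lt_trichotomy x (2 * s + k) with h2 | h2 | h2
      · -- intersection empty
        have hint : Tset s k (x - s) ∩ Tset s k (x - s - k) = ∅ := by
          ext y
          simp only [Tset, Set.mem_inter_iff, Set.mem_setOf_eq, Set.mem_empty_iff_false,
            iff_false]
          rintro ⟨⟨hy0, hle, a, b, hab⟩, _, _, a', b', hab'⟩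
          have hB : b * (s + k) = 0 ∨ s + k ≤ b * (s + k) := by
            rcases Nat.eq_zero_or_pos b with rfl | hb
            · left; simp
            · right; exact Nat.le_mul_of_pos_left (s + k) hb
          have hB' : b' * (s + k) = 0 ∨ s + k ≤ b' * (s + k) := by
            rcases Nat.eq_zero_or_pos b' with rfl | hb
            · left; simp
            · right; exact Nat.le_mul_of_pos_left (s + k) hb
          have hnat : a * s = a' * s + k := by omega
          have hdvd : s ∣ k := by
            have hz : (a : ℤ) * s = a' * s + k := by exact_mod_cast hnat
            have : (s : ℤ) ∣ (k : ℤ) := ⟨(a : ℤ) - a', by linear_combination -hz⟩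
            exact_mod_cast this
          have h1 : s ∣ 1 := hcop ▸ Nat.dvd_gcd dvd_rfl hdvd
          have := Nat.le_of_dvd one_pos h1
          omega
        rw [hUnion]
        rw [hint] at hcard
        simp only [Set.ncard_empty] at hcard
        have hd2 : (x - s - k) / s = 0 := Nat.div_eq_of_lt (by omega)
        omega
      · exact absurd h2 hx2sk
      · -- x > 2s + k
        have hwP : x - 2 * s - k ∈ Pset s k := by
          refine ⟨by omega, ?_⟩
          rintro ⟨u, v, huv⟩
          refine hxnr ⟨u + 1, v + 1, ?_⟩
          have e1 : (u + 1) * s = u * s + s := by ring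
          have e2 : (v + 1) * (s + k) = v * (s + k) + (s + k) := by ring
          omega
        have hint : Tset s k (x - s) ∩ Tset s k (x - s - k) = Tset s k (x - 2 * s - k) := by
          ext y
          simp only [Tset, Set.mem_inter_iff, Set.mem_setOf_eq]
          constructor
          · rintro ⟨⟨hy0, hle, a, b, hab⟩, ⟨_, _, a', b', hab'⟩⟩
            have h1 : y + a * s + b * (s + k) + s = x := by omega
            have h2' : y + a' * s + b' * (s + k) + (s + k) = x := by omega
            obtain ⟨A, B, hAB⟩ := keyLemma s k y x a b a' b' hs hk hcop hy0 h1 h2' hxnr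
            exact ⟨hy0, hle, A, B, by omega⟩
          · rintro ⟨hy0, hle, a, b, hab⟩
            constructor
            · refine ⟨hy0, hle, a, b + 1, ?_⟩
              have : (b + 1) * (s + k) = b * (s + k) + (s + k) := by ring
              omega
            · refine ⟨hy0, hle, a + 1, b, ?_⟩
              have : (a + 1) * s = a * s + s := by ring
              omega
        rw [hUnion]
        rw [hint] at hcard
        have ihw := ih (x - 2 * s - k) (by omega) hwP
        rw [T_eq s k (x - 2 * s - k) hwP] at ihw
        have hd2 : (x - s - k) / s = (x - 2 * s - k) / s + 1 := by
          have := Nat.div_eq_sub_div (show 0 < s by omega) (show s ≤ x - s - k by omega)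
          have he : x - s - k - s = x - 2 * s - k := by omega
          rw [he] at this
          exact this
        omega
end

section
/- Let s and k be coprime positive integers with s ≥ 2. For every x ∈ P, the element x mod s is the minimum of ⟨x⟩ ∩ E with respect to the order <_E. -/
lemma mem_Eset_of (s k : ℕ) (hs : 2 ≤ s) (hk : 0 < k) (y : ℕ)
    (h1 : 0 < y) (h2 : y ≤ s + k - 1) (h3 : ¬ s ∣ y) : y ∈ Eset s k := by
  refine ⟨⟨h1, ?_⟩, h2⟩
  rintro ⟨a, b, hab⟩
  rcases Nat.eq_zero_or_pos b with hb | hb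
  · subst hb
    exact h3 ⟨a, by rw [Nat.mul_comm]; omega⟩
  · have h5 : s + k ≤ b * (s + k) := Nat.le_mul_of_pos_left _ hb
    omega

lemma chain_up (s k : ℕ) (hs : 2 ≤ s) (hk : 0 < k) (hcop : Nat.Coprime s k)
    (r c : ℕ) (hr0 : 0 < r) (hrs : r < s) (hcs : c < s)
    (hck : c * k % s = r) :
    ∀ n b y, b * (s + k) + y = n → 0 < y → y ≤ s + k - 1 → ¬ s ∣ y →
      b < c → (y + b * k) % s = r → y ≠ r → ltE s k r y := by
  have hrE : r ∈ Eset s k := mem_Eset_of s k hs hk r hr0 (by omega)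
    (fun hd => by have := Nat.le_of_dvd hr0 hd; omega)
  intro n
  induction n using Nat.strong_induction_on with
  | _ n ih =>
    intro b y hn hy0 hyk hys hbc hmod hyr
    have hyE : y ∈ Eset s k := mem_Eset_of s k hs hk y hy0 hyk hys
    by_cases hylt : y < s
    · -- step down by k : predecessor is y + k
      obtain ⟨b', rfl⟩ : ∃ b', b = b' + 1 := by
        refine ⟨b - 1, ?_⟩
        rcases Nat.eq_zero_or_pos b with hb | hb
        · exfalso; subst hb
          simp only [Nat.zero_mul, Nat.add_zero] at hmod
          rw [Nat.mod_eq_of_lt hylt] at hmod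
          exact hyr hmod
        · omega
      set z := y + k with hz
      have hyz : y + (b' + 1) * k = z + b' * k := by ring
      have hmodz : (z + b' * k) % s = r := by rw [← hyz]; exact hmod
      have hzs : ¬ s ∣ z := by
        rintro ⟨e, he⟩
        have h1 : (z + b' * k) % s = b' * k % s := by
          rw [he, Nat.mul_add_mod]
        have h2 : b' * k % s = c * k % s := by rw [h1] at hmodz; rw [hmodz, hck]
        have hb'c : b' < c := by omega
        have h3 : s ∣ c * k - b' * k :=
          (Nat.modEq_iff_dvd' (Nat.mul_le_mul_right k (le_of_lt hb'c))).mp h2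
        rw [← Nat.sub_mul] at h3
        have h4 : s ∣ c - b' := hcop.dvd_of_dvd_mul_right h3
        have h5 : s ≤ c - b' := Nat.le_of_dvd (by omega) h4
        omega
      have hzE : z ∈ Eset s k := mem_Eset_of s k hs hk z (by omega) (by omega) hzs
      have hcov : covE s k z y := ⟨hzE, hyE, Or.inr hz⟩
      by_cases hzr : z = r
      · exact Relation.TransGen.single (hzr ▸ hcov)
      · have hm : b' * (s + k) + z < n := by
          have : (b' + 1) * (s + k) = b' * (s + k) + (s + k) := by ring
          omega
        exact Relation.TransGen.tail
          (ih _ hm b' z rfl (by omega) (by omega) hzs (by omega) hmodz hzr) hcov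
    · -- step down by s : predecessor is y - s
      have hys' : s < y := by
        rcases Nat.lt_or_ge s y with h | h
        · exact h
        · exfalso; exact hys ⟨1, by omega⟩
      set z := y - s with hz
      have hzs : ¬ s ∣ z := fun ⟨e, he⟩ => hys ⟨e + 1, by rw [Nat.mul_add, Nat.mul_one]; omega⟩
      have hmodz : (z + b * k) % s = r := by
        have h1 : z + b * k + s = y + b * k := by omega
        rw [← hmod, ← h1, Nat.add_mod_right]
      have hzE : z ∈ Eset s k := mem_Eset_of s k hs hk z (by omega) (by omega) hzs
      have hcov : covE s k z y := ⟨hzE, hyE, Or.inl (by omega)⟩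
      by_cases hzr : z = r
      · exact Relation.TransGen.single (hzr ▸ hcov)
      · have hm : b * (s + k) + z < n := by omega
        exact Relation.TransGen.tail
          (ih _ hm b z rfl (by omega) (by omega) hzs hbc hmodz hzr) hcov

theorem mod_s_first_elt (s k : ℕ) (hs : 2 ≤ s) (hk : 0 < k)
    (hcop : Nat.Coprime s k) :
    ∀ x ∈ Pset s k, x % s ∈ genIdeal s k x ∩ Eset s k ∧
      ∀ y ∈ genIdeal s k x ∩ Eset s k, y ≠ x % s → ltE s k (x % s) y := by
  haveI : NeZero s := ⟨by omega⟩
  rintro x ⟨hx0, hxrep⟩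
  set r := x % s with hrdef
  have hsx : ¬ s ∣ x := by
    rintro ⟨e, he⟩
    exact hxrep ⟨e, 0, by rw [Nat.mul_comm]; omega⟩
  have hr0 : 0 < r := Nat.pos_of_ne_zero fun h => hsx (Nat.dvd_of_mod_eq_zero h)
  have hrs : r < s := Nat.mod_lt _ (by omega)
  have hrI : r ∈ genIdeal s k x :=
    ⟨hr0, x / s, 0, by have := Nat.mod_add_div' x s; omega⟩
  have hrE : r ∈ Eset s k := mem_Eset_of s k hs hk r hr0 (by omega)
    (fun hd => by have := Nat.le_of_dvd hr0 hd; omega)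
  refine ⟨⟨hrI, hrE⟩, ?_⟩
  -- set up c
  have hkunit : IsUnit (k : ZMod s) := (ZMod.isUnit_iff_coprime k s).mpr hcop.symm
  set u : ZMod s := (r : ZMod s) * (k : ZMod s)⁻¹ with hu
  set c : ℕ := u.val with hcdef
  have hcs : c < s := ZMod.val_lt u
  have hckZ : ((c * k : ℕ) : ZMod s) = (r : ZMod s) := by
    push_cast
    have hcu : ((c : ℕ) : ZMod s) = u := by
      rw [hcdef]; simp [ZMod.natCast_val, ZMod.cast_id]
    rw [hcu, hu, mul_assoc, ZMod.inv_mul_of_unit _ hkunit, mul_one]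
  have hck : c * k % s = r := by
    have h1 : c * k ≡ r [MOD s] := (ZMod.natCast_eq_natCast_iff _ _ _).mp hckZ
    have h2 : r % s = r := Nat.mod_eq_of_lt hrs
    unfold Nat.ModEq at h1; omega
  have hxc : x < c * (s + k) := by
    by_contra h
    push_neg at h
    have h1 : c * (s + k) % s = r := by
      have : c * (s + k) = c * k + c * s := by ring
      rw [this, Nat.add_mul_mod_self_right, hck]
    have h2 : c * (s + k) ≡ x [MOD s] := by
      unfold Nat.ModEq; omega
    obtain ⟨e, he⟩ := (Nat.modEq_iff_dvd' h).mp h2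
    exact hxrep ⟨e, c, by rw [Nat.mul_comm e s]; omega⟩
  rintro y ⟨⟨hy0, a, b, hyab⟩, hyP, hyk⟩ hyr
  have hysd : ¬ s ∣ y := by
    rintro ⟨e, he⟩
    exact hyP.2 ⟨e, 0, by rw [Nat.mul_comm]; omega⟩
  have hbc : b < c := by
    have h1 : b * (s + k) < c * (s + k) := by omega
    exact lt_of_mul_lt_mul_right h1 (Nat.zero_le _)
  have hmod : (y + b * k) % s = r := by
    have h1 : x = (y + b * k) + (a + b) * s := by rw [← hyab]; ring
    rw [hrdef, h1, Nat.add_mul_mod_self_right]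
  exact chain_up s k hs hk hcop r c hr0 hrs hcs hck _ b y rfl hy0 hyk hysd hbc hmod hyr
end

section
/- Let s and k be coprime positive integers with s ≥ 2. The map π sending x ∈ P to ⟨x⟩ ∩ E is a bijection from P onto the set of nonempty interval ideals. -/
/-- An interval ideal: a subset of `E` that is an interval with respect to `<_E`
and is a downward-closed subset (order ideal) of `P`. -/
def IsIntervalIdeal (s k : ℕ) (I : Set ℕ) : Prop :=
  I ⊆ Eset s k ∧
  (∀ x ∈ I, ∀ y ∈ I, ∀ z, ltE s k x z → ltE s k z y → z ∈ I) ∧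
  (∀ x ∈ I, ∀ y, ltP s k y x → y ∈ I)

namespace Aux

def bco (s k x : ℕ) : ℕ := ((x : ZMod s) * (k : ZMod s)⁻¹).val

def ico (s k x : ℕ) : ℕ := (bco s k x * (s + k) - x) / s

variable {s k : ℕ}

lemma cop' (hcop : Nat.Coprime s k) : Nat.Coprime s (s + k) := by
  rw [add_comm]; exact (Nat.coprime_add_self_right).mpr hcop

lemma bco_lt (hs : 2 ≤ s) (x : ℕ) : bco s k x < s := by
  haveI : NeZero s := ⟨by omega⟩
  exact ZMod.val_lt _

lemma bco_modeq (hs : 2 ≤ s) (hcop : Nat.Coprime s k) (x : ℕ) :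
    x ≡ bco s k x * k [MOD s] := by
  haveI : NeZero s := ⟨by omega⟩
  symm
  apply (ZMod.natCast_eq_natCast_iff _ _ _).mp
  push_cast
  unfold bco
  rw [ZMod.natCast_val, ZMod.cast_id]
  rw [mul_assoc, ZMod.inv_mul_of_unit _ ((ZMod.isUnit_iff_coprime k s).mpr hcop.symm), mul_one]

lemma coords_eq (hs : 2 ≤ s) (hcop : Nat.Coprime s k) {x b i : ℕ}
    (h : x + i * s = b * (s + k)) (hb : b < s) :
    b = bco s k x ∧ i = ico s k x := by
  haveI : NeZero s := ⟨by omega⟩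
  have hbv : b = bco s k x := by
    have h1 : ((b : ZMod s)) = (x : ZMod s) * (k : ZMod s)⁻¹ := by
      have hx : (x : ZMod s) = (b : ZMod s) * (k : ZMod s) := by
        have h2 : ((x + i * s : ℕ) : ZMod s) = ((b * (s + k) : ℕ) : ZMod s) := by rw [h]
        push_cast at h2
        simpa [ZMod.natCast_self] using h2
      rw [hx, mul_assoc, ZMod.mul_inv_of_unit _ ((ZMod.isUnit_iff_coprime k s).mpr hcop.symm),
        mul_one]
    have h3 := congrArg ZMod.val h1
    rwa [ZMod.val_cast_of_lt hb] at h3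
  rw [hbv] at h
  refine ⟨hbv, ?_⟩
  have h2 : bco s k x * (s + k) - x = i * s := by omega
  rw [ico, h2, Nat.mul_div_cancel _ (by omega : 0 < s)]

lemma mem_P_iff (hs : 2 ≤ s) (hcop : Nat.Coprime s k) {x : ℕ} :
    x ∈ Pset s k ↔ 0 < x ∧ ∃ b i : ℕ, 0 < b ∧ b < s ∧ 0 < i ∧ x + i * s = b * (s + k) := by
  constructor
  · rintro ⟨hx0, hnr⟩
    refine ⟨hx0, ?_⟩
    set b := bco s k x with hbdef
    have hblt : b < s := bco_lt hs x
    have hcong : x ≡ b * (s + k) [MOD s] := by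
      calc x ≡ b * k [MOD s] := bco_modeq hs hcop x
        _ ≡ b * (s + k) [MOD s] := (Nat.ModEq.mul_left b Nat.add_modEq_left).symm
    have hlt : x < b * (s + k) := by
      by_contra hge
      push_neg at hge
      obtain ⟨a, ha⟩ := (Nat.modEq_iff_dvd' hge).mp hcong.symm
      have h5 : s * a = a * s := Nat.mul_comm s a
      exact hnr ⟨a, b, by omega⟩
    have hb0 : 0 < b := by
      rcases Nat.eq_zero_or_pos b with h0 | h
      · rw [h0, zero_mul] at hlt; omega
      · exact h
    obtain ⟨i, hi⟩ := (Nat.modEq_iff_dvd' hlt.le).mp hcong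
    have h5 : s * i = i * s := Nat.mul_comm s i
    have hi0 : 0 < i := by
      rcases Nat.eq_zero_or_pos i with h0 | h
      · rw [h0, Nat.mul_zero] at hi; omega
      · exact h
    exact ⟨b, i, hb0, hblt, hi0, by omega⟩
  · rintro ⟨hx0, b, i, hb0, hblt, hi0, heq⟩
    refine ⟨hx0, ?_⟩
    rintro ⟨a, c, rfl⟩
    have hcb : c ≤ b := by
      have h1 : c * (s + k) ≤ b * (s + k) := by omega
      exact Nat.le_of_mul_le_mul_right h1 (by omega)
    have hkey : (a + i) * s = (b - c) * (s + k) := by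
      have h1 : (b - c) * (s + k) + c * (s + k) = b * (s + k) := by
        rw [← Nat.add_mul]; congr 1; omega
      have h2 : (a + i) * s = a * s + i * s := Nat.add_mul a i s
      omega
    have hdvd : (s + k) ∣ (a + i) * s := ⟨b - c, by rw [hkey]; ring⟩
    obtain ⟨t, ht⟩ := (cop' hcop).symm.dvd_of_dvd_mul_right hdvd
    have ht1 : 1 ≤ t := by
      rcases Nat.eq_zero_or_pos t with h0 | h
      · rw [h0, Nat.mul_zero] at ht; omega
      · exact h
    have hbc : b - c = t * s := by
      have h3 : (s + k) * (t * s) = (s + k) * (b - c) := by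
        rw [← mul_assoc, ← ht, hkey]; ring
      have h0p : 0 < s + k := by omega
      exact (Nat.eq_of_mul_eq_mul_left h0p h3).symm
    have h4 : s ≤ b - c := by
      calc s = 1 * s := (one_mul s).symm
        _ ≤ t * s := Nat.mul_le_mul_right s ht1
        _ = b - c := hbc.symm
    omega

lemma coords_spec (hs : 2 ≤ s) (hcop : Nat.Coprime s k) {x : ℕ} (hx : x ∈ Pset s k) :
    0 < bco s k x ∧ bco s k x < s ∧ 0 < ico s k x ∧
      x + ico s k x * s = bco s k x * (s + k) := by
  obtain ⟨hx0, b, i, hb0, hblt, hi0, heq⟩ := (mem_P_iff hs hcop).mp hx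
  obtain ⟨hb, hi⟩ := coords_eq hs hcop heq hblt
  exact ⟨hb ▸ hb0, hb ▸ hblt, hi ▸ hi0, by rw [← hb, ← hi]; exact heq⟩

lemma mem_E_iff (hs : 2 ≤ s) {x : ℕ} : x ∈ Eset s k ↔ x ∈ Pset s k ∧ x < s + k := by
  unfold Eset
  constructor
  · rintro ⟨h1, h2⟩; exact ⟨h1, by omega⟩
  · rintro ⟨h1, h2⟩; exact ⟨h1, by omega⟩

lemma mem_P_of_genIdeal {x y : ℕ} (hx : x ∈ Pset s k) (hy : y ∈ genIdeal s k x) :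
    y ∈ Pset s k := by
  obtain ⟨hy0, a, c, heq⟩ := hy
  refine ⟨hy0, ?_⟩
  rintro ⟨a', c', rfl⟩
  exact hx.2 ⟨a' + a, c' + c, by rw [← heq]; ring⟩

lemma covE_coords (hs : 2 ≤ s) (hcop : Nat.Coprime s k) {u v : ℕ} (h : covE s k u v) :
    bco s k v ≤ bco s k u ∧ ico s k v + 1 = ico s k u := by
  obtain ⟨huE, hvE, hcase⟩ := h
  obtain ⟨huP, -⟩ := (mem_E_iff hs).mp huE
  obtain ⟨hvP, -⟩ := (mem_E_iff hs).mp hvE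
  obtain ⟨hbu0, hbus, hiu0, hequ⟩ := coords_spec hs hcop huP
  obtain ⟨hbv0, hbvs, hiv0, heqv⟩ := coords_spec hs hcop hvP
  rcases hcase with h1 | h1
  · -- v = u + s
    have h2 : v + (ico s k u - 1) * s = bco s k u * (s + k) := by
      have h3 : (ico s k u - 1) * s + 1 * s = ico s k u * s := by
        rw [← Nat.add_mul]; congr 1; omega
      omega
    obtain ⟨hb, hi⟩ := coords_eq hs hcop h2 hbus
    omega
  · -- u = v + k
    have hbu1 : 1 ≤ bco s k u := hbu0
    have h2 : v + (ico s k u - 1) * s = (bco s k u - 1) * (s + k) := by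
      have h3 : (ico s k u - 1) * s + 1 * s = ico s k u * s := by
        rw [← Nat.add_mul]; congr 1; omega
      have h4 : (bco s k u - 1) * (s + k) + 1 * (s + k) = bco s k u * (s + k) := by
        rw [← Nat.add_mul]; congr 1; omega
      omega
    obtain ⟨hb, hi⟩ := coords_eq hs hcop h2 (by omega)
    omega

lemma ltE_coords (hs : 2 ≤ s) (hcop : Nat.Coprime s k) {u v : ℕ} (h : ltE s k u v) :
    u ∈ Eset s k ∧ v ∈ Eset s k ∧ bco s k v ≤ bco s k u ∧ ico s k v < ico s k u := by
  induction h with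
  | single h1 =>
      obtain ⟨hb, hi⟩ := covE_coords hs hcop h1
      exact ⟨h1.1, h1.2.1, hb, by omega⟩
  | tail h1 h2 ih =>
      obtain ⟨hb, hi⟩ := covE_coords hs hcop h2
      exact ⟨ih.1, h2.2.1, le_trans hb ih.2.2.1, by have := ih.2.2.2; omega⟩

lemma ltP_decomp {x y : ℕ} (h : ltP s k y x) :
    y ∈ Pset s k ∧ ∃ a c : ℕ, y + a * s + c * (s + k) = x := by
  induction h with
  | single h1 =>
      refine ⟨h1.1, ?_⟩
      rcases h1.2.2 with h2 | h2
      · exact ⟨1, 0, by omega⟩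
      · exact ⟨0, 1, by omega⟩
  | tail h1 h2 ih =>
      refine ⟨ih.1, ?_⟩
      obtain ⟨a, c, hac⟩ := ih.2
      rcases h2.2.2 with h3 | h3
      · exact ⟨a + 1, c, by rw [h3, ← hac]; ring⟩
      · exact ⟨a, c + 1, by rw [h3, ← hac]; ring⟩

/-- C1: two elements of `E` at the same level coincide. -/
lemma level_unique (hs : 2 ≤ s) (hcop : Nat.Coprime s k) {u v : ℕ}
    (hu : u ∈ Eset s k) (hv : v ∈ Eset s k) (h : ico s k u = ico s k v) : u = v := by
  obtain ⟨huP, huB⟩ := (mem_E_iff hs).mp hu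
  obtain ⟨hvP, hvB⟩ := (mem_E_iff hs).mp hv
  obtain ⟨hbu0, hbus, hiu0, hequ⟩ := coords_spec hs hcop huP
  obtain ⟨hbv0, hbvs, hiv0, heqv⟩ := coords_spec hs hcop hvP
  have hus : ico s k u * s = ico s k v * s := by rw [h]
  rcases le_total (bco s k u) (bco s k v) with hb | hb
  · have hd : (bco s k v - bco s k u) * (s + k) + bco s k u * (s + k)
        = bco s k v * (s + k) := by rw [← Nat.add_mul]; congr 1; omega
    rcases Nat.eq_zero_or_pos (bco s k v - bco s k u) with h0 | h1
    · rw [h0, zero_mul] at hd; omega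
    · have : s + k ≤ (bco s k v - bco s k u) * (s + k) := Nat.le_mul_of_pos_left _ h1
      omega
  · have hd : (bco s k u - bco s k v) * (s + k) + bco s k v * (s + k)
        = bco s k u * (s + k) := by rw [← Nat.add_mul]; congr 1; omega
    rcases Nat.eq_zero_or_pos (bco s k u - bco s k v) with h0 | h1
    · rw [h0, zero_mul] at hd; omega
    · have : s + k ≤ (bco s k u - bco s k v) * (s + k) := Nat.le_mul_of_pos_left _ h1
      omega

/-- C2': every element of `E` of level `≥ 2` is covered by an element of level one less. -/
lemma exists_succ (hs : 2 ≤ s) (hk : 0 < k) (hcop : Nat.Coprime s k) {u : ℕ}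
    (hu : u ∈ Eset s k) (h2 : 2 ≤ ico s k u) :
    ∃ v ∈ Eset s k, covE s k u v ∧ ico s k v + 1 = ico s k u := by
  obtain ⟨huP, huB⟩ := (mem_E_iff hs).mp hu
  obtain ⟨hbu0, hbus, hiu0, hequ⟩ := coords_spec hs hcop huP
  rcases lt_trichotomy u k with hukk | hukk | hukk
  · -- v = u + s
    have hveq : (u + s) + (ico s k u - 1) * s = bco s k u * (s + k) := by
      have h3 : (ico s k u - 1) * s + 1 * s = ico s k u * s := by
        rw [← Nat.add_mul]; congr 1; omega
      omega
    have hvP : u + s ∈ Pset s k :=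
      (mem_P_iff hs hcop).mpr ⟨by omega, bco s k u, ico s k u - 1, hbu0, hbus, by omega, hveq⟩
    have hvE : u + s ∈ Eset s k := (mem_E_iff hs).mpr ⟨hvP, by omega⟩
    refine ⟨u + s, hvE, ⟨hu, hvE, Or.inl rfl⟩, ?_⟩
    obtain ⟨hb, hi⟩ := coords_eq hs hcop hveq hbus
    omega
  · -- u = k : level 1, contradiction
    exfalso
    subst hukk
    have heqk : u + 1 * s = 1 * (s + u) := by ring
    obtain ⟨hb, hi⟩ := coords_eq hs hcop heqk (by omega)
    omega
  · -- v = u - k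
    have hbu2 : 2 ≤ bco s k u := by
      by_contra hb1
      push_neg at hb1
      have hb1' : bco s k u = 1 := by omega
      rw [hb1', one_mul] at hequ
      have h5 : 2 * s ≤ ico s k u * s := Nat.mul_le_mul_right s h2
      omega
    have hveq : (u - k) + (ico s k u - 1) * s = (bco s k u - 1) * (s + k) := by
      have h3 : (ico s k u - 1) * s + 1 * s = ico s k u * s := by
        rw [← Nat.add_mul]; congr 1; omega
      have h4 : (bco s k u - 1) * (s + k) + 1 * (s + k) = bco s k u * (s + k) := by
        rw [← Nat.add_mul]; congr 1; omega
      omega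
    have hvP : u - k ∈ Pset s k :=
      (mem_P_iff hs hcop).mpr
        ⟨by omega, bco s k u - 1, ico s k u - 1, by omega, by omega, by omega, hveq⟩
    have hvE : u - k ∈ Eset s k := (mem_E_iff hs).mpr ⟨hvP, by omega⟩
    refine ⟨u - k, hvE, ⟨hu, hvE, Or.inr (by omega)⟩, ?_⟩
    obtain ⟨hb, hi⟩ := coords_eq hs hcop hveq (by omega)
    omega

/-- C3: lower level implies above in the order `<_E`. -/
lemma ltE_of_lt (hs : 2 ≤ s) (hk : 0 < k) (hcop : Nat.Coprime s k) :
    ∀ n : ℕ, ∀ u v : ℕ, u ∈ Eset s k → v ∈ Eset s k → ico s k u = n →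
      ico s k v < ico s k u → ltE s k u v := by
  intro n
  induction n using Nat.strong_induction_on with
  | _ n ih =>
    intro u v hu hv hn hlt
    have hvP := ((mem_E_iff hs).mp hv).1
    have hiv1 : 0 < ico s k v := (coords_spec hs hcop hvP).2.2.1
    obtain ⟨w, hwE, hcov, hw⟩ := exists_succ hs hk hcop hu (by omega)
    rcases eq_or_lt_of_le (show ico s k v ≤ ico s k w by omega) with he | hlt2
    · have : w = v := level_unique hs hcop hwE hv (by omega)
      exact Relation.TransGen.single (this ▸ hcov)
    · have hww : ltE s k w v := ih (ico s k w) (by omega) w v hwE hv rfl hlt2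
      exact Relation.TransGen.head hcov hww

/-- Characterization of `⟨x⟩ ∩ E` via coordinates. -/
lemma mem_pi_iff (hs : 2 ≤ s) (hcop : Nat.Coprime s k) {x : ℕ} (hx : x ∈ Pset s k) (e : ℕ) :
    e ∈ genIdeal s k x ∩ Eset s k ↔
      e ∈ Eset s k ∧ bco s k e ≤ bco s k x ∧ ico s k x ≤ ico s k e := by
  obtain ⟨hbx0, hbxs, hix0, heqx⟩ := coords_spec hs hcop hx
  constructor
  · rintro ⟨⟨he0, a, c, hac⟩, heE⟩
    have heP := ((mem_E_iff hs).mp heE).1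
    obtain ⟨hbe0, hbes, hie0, heqe⟩ := coords_spec hs hcop heP
    refine ⟨heE, ?_⟩
    rcases le_or_gt (bco s k e + c) (bco s k x) with hbc | hbc
    · -- the good case
      set d := bco s k x - (bco s k e + c) with hddef
      have hd : bco s k e + c + d = bco s k x := by omega
      have hdm : bco s k e * (s + k) + c * (s + k) + d * (s + k) = bco s k x * (s + k) := by
        rw [← Nat.add_mul, ← Nat.add_mul, hd]
      have hlin : a * s + ico s k x * s = ico s k e * s + d * (s + k) := by omega
      have hle : ico s k e ≤ a + ico s k x := by
        have h1 : (a + ico s k x) * s = a * s + ico s k x * s := Nat.add_mul _ _ _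
        have h2 : ico s k e * s ≤ (a + ico s k x) * s := by omega
        exact Nat.le_of_mul_le_mul_right h2 (by omega)
      set q := a + ico s k x - ico s k e with hqdef
      have hq : q + ico s k e = a + ico s k x := by omega
      have hqm : q * s + ico s k e * s = a * s + ico s k x * s := by
        rw [← Nat.add_mul, hq, Nat.add_mul]
      have hqd : q * s = d * (s + k) := by omega
      have hsd : s ∣ d := by
        refine (cop' hcop).dvd_of_dvd_mul_right (⟨q, ?_⟩ : s ∣ d * (s + k))
        rw [← hqd]; ring
      have hd0 : d = 0 := Nat.eq_zero_of_dvd_of_lt hsd (by omega)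
      rw [hd0, zero_mul] at hqd
      have hq0 : q = 0 := by
        rcases Nat.eq_zero_or_pos q with h | h
        · exact h
        · have := Nat.le_mul_of_pos_left s h; omega
      constructor
      · omega
      · omega
    · -- impossible case
      exfalso
      set d := bco s k e + c - bco s k x with hddef
      have hd : bco s k x + d = bco s k e + c := by omega
      have hdm : bco s k x * (s + k) + d * (s + k) = bco s k e * (s + k) + c * (s + k) := by
        rw [← Nat.add_mul, hd, Nat.add_mul]
      have hlin : d * (s + k) + a * s + ico s k x * s = ico s k e * s := by omega
      have hle : a + ico s k x ≤ ico s k e := by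
        have h1 : (a + ico s k x) * s = a * s + ico s k x * s := Nat.add_mul _ _ _
        have h2 : (a + ico s k x) * s ≤ ico s k e * s := by omega
        exact Nat.le_of_mul_le_mul_right h2 (by omega)
      set q := ico s k e - (a + ico s k x) with hqdef
      have hq : a + ico s k x + q = ico s k e := by omega
      have hqm : a * s + ico s k x * s + q * s = ico s k e * s := by
        rw [← Nat.add_mul, ← Nat.add_mul, hq]
      have hqd : q * s = d * (s + k) := by omega
      have hpq : (s + k) ∣ q := by
        refine (cop' hcop).symm.dvd_of_dvd_mul_right (⟨d, ?_⟩ : (s + k) ∣ q * s)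
        rw [hqd]; ring
      have hq0 : 0 < q := by
        rcases Nat.eq_zero_or_pos q with h | h
        · exfalso
          rw [h, zero_mul] at hqd
          have := Nat.le_mul_of_pos_left (s + k) (show 0 < d by omega)
          omega
        · exact h
      have hqp : s + k ≤ q := Nat.le_of_dvd hq0 hpq
      have hds : s ≤ d := by
        have h1 : (s + k) * s ≤ q * s := Nat.mul_le_mul_right s hqp
        have h2 : s * (s + k) ≤ d * (s + k) := by
          have : s * (s + k) = (s + k) * s := mul_comm _ _
          omega
        exact Nat.le_of_mul_le_mul_right h2 (by omega)
      -- then c ≥ bco x + 1 and we get a contradiction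
      have hc : bco s k x + 1 ≤ c := by omega
      have h7 : (bco s k x + 1) * (s + k) ≤ c * (s + k) := Nat.mul_le_mul_right _ hc
      have h8 : (bco s k x + 1) * (s + k) = bco s k x * (s + k) + (s + k) := by
        rw [Nat.add_mul]; omega
      have h9 : s ≤ ico s k x * s := Nat.le_mul_of_pos_left s hix0
      omega
  · rintro ⟨heE, hble, hige⟩
    have heP := ((mem_E_iff hs).mp heE).1
    obtain ⟨hbe0, hbes, hie0, heqe⟩ := coords_spec hs hcop heP
    refine ⟨⟨heP.1, ico s k e - ico s k x, bco s k x - bco s k e, ?_⟩, heE⟩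
    have h1 : (ico s k e - ico s k x) * s + ico s k x * s = ico s k e * s := by
      rw [← Nat.add_mul]; congr 1; omega
    have h2 : (bco s k x - bco s k e) * (s + k) + bco s k e * (s + k)
        = bco s k x * (s + k) := by
      rw [← Nat.add_mul]; congr 1; omega
    omega

/-- `⟨x⟩ ∩ E` is nonempty for `x ∈ P`. -/
lemma pi_nonempty (hs : 2 ≤ s) (hcop : Nat.Coprime s k) {x : ℕ} (hx : x ∈ Pset s k) :
    (genIdeal s k x ∩ Eset s k).Nonempty := by
  have hnd : ¬ (s + k) ∣ x := by
    rintro ⟨t, ht⟩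
    exact hx.2 ⟨0, t, by rw [ht]; ring⟩
  have h0 : 0 < x % (s + k) := by
    rcases Nat.eq_zero_or_pos (x % (s + k)) with h | h
    · exact absurd (Nat.dvd_of_mod_eq_zero h) hnd
    · exact h
  have hgen : x % (s + k) ∈ genIdeal s k x := by
    refine ⟨h0, 0, x / (s + k), ?_⟩
    have h1 := Nat.mod_add_div x (s + k)
    have h2 : (s + k) * (x / (s + k)) = (x / (s + k)) * (s + k) := mul_comm _ _
    omega
  have hP := mem_P_of_genIdeal hx hgen
  exact ⟨x % (s + k), hgen, (mem_E_iff hs).mpr ⟨hP, Nat.mod_lt x (by omega)⟩⟩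

/-- There is an element of `⟨x⟩ ∩ E` with the same column as `x`. -/
lemma exists_b_elem (hs : 2 ≤ s) (hk : 0 < k) (hcop : Nat.Coprime s k) {x : ℕ}
    (hx : x ∈ Pset s k) :
    ∃ e ∈ genIdeal s k x ∩ Eset s k, bco s k e = bco s k x := by
  obtain ⟨hbx0, hbxs, hix0, heqx⟩ := coords_spec hs hcop hx
  have hx0 : 0 < x := hx.1
  set e := (x - 1) % s + 1 with hedef
  set a := (x - 1) / s with hadef
  have hdiv : (x - 1) % s + s * a = x - 1 := Nat.mod_add_div (x - 1) s
  have hcomm : s * a = a * s := mul_comm _ _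
  have heq : e + a * s = x := by omega
  have hgen : e ∈ genIdeal s k x := by
    refine ⟨by omega, a, 0, ?_⟩
    rw [Nat.zero_mul]; omega
  have heP := mem_P_of_genIdeal hx hgen
  have hmod : (x - 1) % s < s := Nat.mod_lt _ (by omega)
  have heE : e ∈ Eset s k := (mem_E_iff hs).mpr ⟨heP, by omega⟩
  have heq2 : e + (a + ico s k x) * s = bco s k x * (s + k) := by
    have h1 : (a + ico s k x) * s = a * s + ico s k x * s := Nat.add_mul _ _ _
    omega
  obtain ⟨hb, -⟩ := coords_eq hs hcop heq2 hbxs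
  exact ⟨e, ⟨hgen, heE⟩, hb.symm⟩

/-- There is an element of `⟨x⟩ ∩ E` with the same level as `x`. -/
lemma exists_i_elem (hs : 2 ≤ s) (hcop : Nat.Coprime s k) {x : ℕ} (hx : x ∈ Pset s k) :
    ∃ e ∈ genIdeal s k x ∩ Eset s k, ico s k e = ico s k x := by
  obtain ⟨hbx0, hbxs, hix0, heqx⟩ := coords_spec hs hcop hx
  have hnd : ¬ (s + k) ∣ x := by
    rintro ⟨t, ht⟩
    exact hx.2 ⟨0, t, by rw [ht]; ring⟩
  have h0 : 0 < x % (s + k) := by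
    rcases Nat.eq_zero_or_pos (x % (s + k)) with h | h
    · exact absurd (Nat.dvd_of_mod_eq_zero h) hnd
    · exact h
  set e := x % (s + k) with hedef
  set c := x / (s + k) with hcdef
  have hltp : e < s + k := Nat.mod_lt x (by omega)
  have hdiv : e + (s + k) * c = x := Nat.mod_add_div x (s + k)
  have hcomm : (s + k) * c = c * (s + k) := mul_comm _ _
  have heq : e + c * (s + k) = x := by omega
  have hgen : e ∈ genIdeal s k x := ⟨h0, 0, c, by rw [Nat.zero_mul]; omega⟩
  have heP := mem_P_of_genIdeal hx hgen
  have heE : e ∈ Eset s k := (mem_E_iff hs).mpr ⟨heP, by omega⟩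
  have hcB : c ≤ bco s k x := by
    have h1 : c * (s + k) ≤ bco s k x * (s + k) := by omega
    exact Nat.le_of_mul_le_mul_right h1 (by omega)
  have heq2 : e + ico s k x * s = (bco s k x - c) * (s + k) := by
    have h1 : (bco s k x - c) * (s + k) + c * (s + k) = bco s k x * (s + k) := by
      rw [← Nat.add_mul]; congr 1; omega
    omega
  obtain ⟨-, hi⟩ := coords_eq hs hcop heq2 (lt_of_le_of_lt (Nat.sub_le _ _) hbxs)
  exact ⟨e, ⟨hgen, heE⟩, hi.symm⟩

end Aux

open Aux

theorem ideal_inter_E_bijective (s k : ℕ) (hs : 2 ≤ s) (hk : 0 < k)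
    (hcop : Nat.Coprime s k) :
    Set.BijOn (fun x => genIdeal s k x ∩ Eset s k) (Pset s k)
      {I : Set ℕ | IsIntervalIdeal s k I ∧ I.Nonempty} := by
  refine ⟨?_, ?_, ?_⟩
  · -- MapsTo
    intro x hx
    refine ⟨⟨Set.inter_subset_right, ?_, ?_⟩, pi_nonempty hs hcop hx⟩
    · -- convexity
      intro u hu v hv z h1 h2
      obtain ⟨-, hzE, hbzu, -⟩ := ltE_coords hs hcop h1
      obtain ⟨-, -, -, hizv⟩ := ltE_coords hs hcop h2
      obtain ⟨-, hbu, -⟩ := (mem_pi_iff hs hcop hx u).mp hu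
      obtain ⟨-, -, hiv⟩ := (mem_pi_iff hs hcop hx v).mp hv
      exact (mem_pi_iff hs hcop hx z).mpr ⟨hzE, le_trans hbzu hbu, by omega⟩
    · -- down-closed
      intro u hu y hy
      obtain ⟨hyP, a, c, hac⟩ := ltP_decomp hy
      obtain ⟨⟨hu0, a', c', hu_eq⟩, huE⟩ := hu
      have huB := ((mem_E_iff hs).mp huE).2
      refine ⟨⟨hyP.1, a + a', c + c', by rw [← hu_eq, ← hac]; ring⟩,
        (mem_E_iff hs).mpr ⟨hyP, by omega⟩⟩
  · -- InjOn
    intro x hx x' hx' heq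
    simp only at heq
    obtain ⟨e1, he1, hb1⟩ := exists_b_elem hs hk hcop hx
    obtain ⟨e2, he2, hi2⟩ := exists_i_elem hs hcop hx
    obtain ⟨f1, hf1, hb1'⟩ := exists_b_elem hs hk hcop hx'
    obtain ⟨f2, hf2, hi2'⟩ := exists_i_elem hs hcop hx'
    have hB : bco s k x = bco s k x' := by
      have h1 := ((mem_pi_iff hs hcop hx' e1).mp (heq ▸ he1)).2.1
      have h2 := ((mem_pi_iff hs hcop hx f1).mp (heq ▸ hf1)).2.1
      omega
    have hJ : ico s k x = ico s k x' := by
      have h1 := ((mem_pi_iff hs hcop hx' e2).mp (heq ▸ he2)).2.2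
      have h2 := ((mem_pi_iff hs hcop hx f2).mp (heq ▸ hf2)).2.2
      omega
    obtain ⟨-, -, -, heqx⟩ := coords_spec hs hcop hx
    obtain ⟨-, -, -, heqx'⟩ := coords_spec hs hcop hx'
    rw [hB, hJ] at heqx
    omega
  · -- SurjOn
    intro I hI
    obtain ⟨⟨hIE, hconv, hdown⟩, hw⟩ := hI
    obtain ⟨w, hwI⟩ := hw
    set T := ico s k '' I with hTdef
    have hTne : T.Nonempty := ⟨ico s k w, ⟨w, hwI, rfl⟩⟩
    have hTb : BddAbove T := by
      refine ⟨s * (s + k), ?_⟩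
      rintro _ ⟨e, heI, rfl⟩
      have heP := ((mem_E_iff hs).mp (hIE heI)).1
      obtain ⟨hbe0, hbes, hie0, heqe⟩ := coords_spec hs hcop heP
      have h1 : ico s k e ≤ ico s k e * s := Nat.le_mul_of_pos_right _ (by omega)
      have h2 : bco s k e * (s + k) ≤ s * (s + k) := Nat.mul_le_mul_right _ (by omega)
      omega
    obtain ⟨M, hMI, hMe⟩ : ∃ M ∈ I, ico s k M = sSup T := by
      obtain ⟨M, hMI, hMe⟩ := Nat.sSup_mem hTne hTb
      exact ⟨M, hMI, hMe⟩
    have hmax : ∀ e ∈ I, ico s k e ≤ ico s k M := by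
      intro e heI
      rw [hMe]; exact le_csSup hTb ⟨e, heI, rfl⟩
    obtain ⟨m, hmI, hme⟩ : ∃ m ∈ I, ico s k m = sInf T := by
      obtain ⟨m, hmI, hme⟩ := Nat.sInf_mem hTne
      exact ⟨m, hmI, hme⟩
    have hmin : ∀ e ∈ I, ico s k m ≤ ico s k e := by
      intro e heI
      rw [hme]; exact Nat.sInf_le ⟨e, heI, rfl⟩
    have hME := hIE hMI
    have hmE := hIE hmI
    have hMP := ((mem_E_iff hs).mp hME).1
    have hmP := ((mem_E_iff hs).mp hmE).1
    obtain ⟨hbM0, hbMs, hiM0, heqM⟩ := coords_spec hs hcop hMP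
    obtain ⟨hbm0, hbms, him0, heqm⟩ := coords_spec hs hcop hmP
    have hJM : ico s k m ≤ ico s k M := hmin M hMI
    have hM1 : 0 < M := hMP.1
    have hm1 : 0 < m := hmP.1
    have hle : ico s k m * s < bco s k M * (s + k) := by
      have h1 : ico s k m * s ≤ ico s k M * s := Nat.mul_le_mul_right _ hJM
      omega
    set x := bco s k M * (s + k) - ico s k m * s with hxdef
    have hxeq : x + ico s k m * s = bco s k M * (s + k) := by omega
    have hx0 : 0 < x := by omega
    have hxP : x ∈ Pset s k :=
      (mem_P_iff hs hcop).mpr ⟨hx0, bco s k M, ico s k m, hbM0, hbMs, him0, hxeq⟩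
    obtain ⟨hbx, hix⟩ := coords_eq hs hcop hxeq hbMs
    -- M is at most s (else M - s would be a smaller element of I, contradicting maximality)
    have hMs : M ≤ s := by
      by_contra hMgt
      push_neg at hMgt
      have hfeq : (M - s) + (ico s k M + 1) * s = bco s k M * (s + k) := by
        have h1 : (ico s k M + 1) * s = ico s k M * s + 1 * s := Nat.add_mul _ _ _
        omega
      have hfP : M - s ∈ Pset s k :=
        (mem_P_iff hs hcop).mpr ⟨by omega, bco s k M, ico s k M + 1, hbM0, hbMs, by omega, hfeq⟩
      have hcov : covP s k (M - s) M := ⟨hfP, hMP, Or.inl (by omega)⟩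
      have hfI : M - s ∈ I := hdown M hMI (M - s) (Relation.TransGen.single hcov)
      obtain ⟨-, hif⟩ := coords_eq hs hcop hfeq hbMs
      have := hmax (M - s) hfI
      omega
    refine ⟨x, hxP, ?_⟩
    show genIdeal s k x ∩ Eset s k = I
    ext e
    constructor
    · intro he
      obtain ⟨heE, hble, hige⟩ := (mem_pi_iff hs hcop hxP e).mp he
      rw [← hbx] at hble
      rw [← hix] at hige
      have heP := ((mem_E_iff hs).mp heE).1
      obtain ⟨hbe0, hbes, hie0, heqe⟩ := coords_spec hs hcop heP
      have he1 : 0 < e := heP.1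
      have hieM : ico s k e ≤ ico s k M := by
        by_contra hgt
        push_neg at hgt
        have h5 : (ico s k M + 1) * s ≤ ico s k e * s := Nat.mul_le_mul_right s (by omega)
        have h6 : bco s k e * (s + k) ≤ bco s k M * (s + k) := Nat.mul_le_mul_right _ hble
        have h7 : (ico s k M + 1) * s = ico s k M * s + 1 * s := Nat.add_mul _ _ _
        omega
      rcases eq_or_lt_of_le hige with he1 | hlt1
      · have : m = e := level_unique hs hcop hmE heE he1
        exact this ▸ hmI
      rcases eq_or_lt_of_le hieM with he2 | hlt2
      · have : e = M := level_unique hs hcop heE hME he2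
        exact this ▸ hMI
      · exact hconv M hMI m hmI e
          (ltE_of_lt hs hk hcop (ico s k M) M e hME heE rfl hlt2)
          (ltE_of_lt hs hk hcop (ico s k e) e m heE hmE rfl hlt1)
    · intro heI
      have heE := hIE heI
      refine (mem_pi_iff hs hcop hxP e).mpr ⟨heE, ?_, ?_⟩
      · rw [← hbx]
        rcases eq_or_lt_of_le (hmax e heI) with he2 | hlt2
        · have : e = M := level_unique hs hcop heE hME he2
          rw [this]
        · exact (ltE_coords hs hcop
            (ltE_of_lt hs hk hcop (ico s k M) M e hME heE rfl hlt2)).2.2.1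
      · rw [← hix]
        exact hmin e heI
end

section
/- Let s, k, d be positive integers with s and k coprime and s ≥ 2. For every x ∈ P, the set ⟨x⟩ is d-distinct if and only if ⟨x⟩ ∩ E is d-distinct. -/
/-- A set of integers is `d`-distinct if any two distinct elements differ by
more than `d`. -/
def DDistinct (d : ℕ) (A : Set ℕ) : Prop :=
  ∀ x ∈ A, ∀ y ∈ A, x ≠ y → (d : ℤ) < |(x : ℤ) - (y : ℤ)|

lemma ideal_sub_s' {s k x u : ℕ} (h : u + s ∈ genIdeal s k x) (hu : 0 < u) :
    u ∈ genIdeal s k x := by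
  obtain ⟨-, a, b, hab⟩ := h
  refine ⟨hu, a + 1, b, ?_⟩
  have : (a + 1) * s = a * s + s := by ring
  omega

lemma ideal_sub_sk' {s k x u : ℕ} (h : u + (s + k) ∈ genIdeal s k x) (hu : 0 < u) :
    u ∈ genIdeal s k x := by
  obtain ⟨-, a, b, hab⟩ := h
  refine ⟨hu, a, b + 1, ?_⟩
  have : (b + 1) * (s + k) = b * (s + k) + (s + k) := by ring
  omega

lemma ideal_subset_P {s k x : ℕ} (hx : x ∈ Pset s k) :
    genIdeal s k x ⊆ Pset s k := by
  rintro y ⟨hy, a, b, hab⟩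
  refine ⟨hy, ?_⟩
  rintro ⟨c, e, rfl⟩
  exact hx.2 ⟨c + a, e + b, by rw [Nat.add_mul, Nat.add_mul]; omega⟩

lemma s_notin_P {s k : ℕ} : s ∉ Pset s k := by
  rintro ⟨-, h⟩
  exact h ⟨1, 0, by ring⟩

lemma sk_notin_P {s k : ℕ} : s + k ∉ Pset s k := by
  rintro ⟨-, h⟩
  exact h ⟨0, 1, by ring⟩

lemma key_lemma (s k d x : ℕ) (hs : 2 ≤ s) (hk : 0 < k) (hx : x ∈ Pset s k) :
    ∀ z y, y ∈ genIdeal s k x → z ∈ genIdeal s k x → y < z → z ≤ y + d →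
    ∃ e e', e ∈ genIdeal s k x ∩ Eset s k ∧ e' ∈ genIdeal s k x ∩ Eset s k ∧
      e < e' ∧ e' ≤ e + d := by
  intro z
  induction z using Nat.strong_induction_on with
  | _ z ih =>
    intro y hy hz hyz hzd
    have hyP : y ∈ Pset s k := ideal_subset_P hx hy
    have hzP : z ∈ Pset s k := ideal_subset_P hx hz
    by_cases hzE : z ≤ s + k - 1
    · exact ⟨y, z, ⟨hy, hyP, by omega⟩, ⟨hz, hzP, hzE⟩, hyz, hzd⟩
    · have hzne : z ≠ s + k := fun h => sk_notin_P (h ▸ hzP)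
      have hz1 : s + k + 1 ≤ z := by omega
      have hzs : z - s ∈ genIdeal s k x := by
        have h1 : z - s + s = z := by omega
        exact ideal_sub_s' (by rw [h1]; exact hz) (by omega)
      by_cases hys : s < y
      · have hys' : y - s ∈ genIdeal s k x := by
          have h1 : y - s + s = y := by omega
          exact ideal_sub_s' (by rw [h1]; exact hy) (by omega)
        exact ih (z - s) (by omega) (y - s) hys' hzs (by omega) (by omega)
      · have hyns : y ≠ s := fun h => s_notin_P (h ▸ hyP)
        have hylt : y < s := by omega
        by_cases hcase : y < z - s
        · exact ih (z - s) (by omega) y hy hzs hcase (by omega)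
        · -- z - s ≤ y < s, so z ≤ y + s; use the pair (z-(s+k), z-s)
          have hzsk : z - (s + k) ∈ genIdeal s k x := by
            have h1 : z - (s + k) + (s + k) = z := by omega
            exact ideal_sub_sk' (by rw [h1]; exact hz) (by omega)
          have hkd : k + 2 ≤ d := by omega
          refine ⟨z - (s + k), z - s, ⟨hzsk, ideal_subset_P hx hzsk, by omega⟩,
            ⟨hzs, ideal_subset_P hx hzs, by omega⟩, by omega, by omega⟩

theorem ideal_ddistinct_iff (s k d : ℕ) (hs : 2 ≤ s) (hk : 0 < k) (hd : 0 < d)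
    (hcop : Nat.Coprime s k) :
    ∀ x ∈ Pset s k,
      (DDistinct d (genIdeal s k x) ↔ DDistinct d (genIdeal s k x ∩ Eset s k)) := by
  intro x hx
  constructor
  · intro h a ha b hb hab
    exact h a ha.1 b hb.1 hab
  · intro hE a ha b hb hab
    by_contra hcon
    have habs := abs_le.mp (not_lt.mp hcon)
    have key : ∃ e e', e ∈ genIdeal s k x ∩ Eset s k ∧
        e' ∈ genIdeal s k x ∩ Eset s k ∧ e < e' ∧ e' ≤ e + d := by
      rcases lt_or_gt_of_ne hab with h | h
      · exact key_lemma s k d x hs hk hx b a ha hb h (by omega)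
      · exact key_lemma s k d x hs hk hx a b hb ha h (by omega)
    obtain ⟨e, e', he, he', hlt, hle⟩ := key
    have := hE e he e' he' (by omega)
    rcases abs_cases ((e : ℤ) - (e' : ℤ)) with ⟨h1, h2⟩ | ⟨h1, h2⟩ <;> omega
end

section
/- Let s, k, d be positive integers with s and k coprime and s ≥ 2, and let H_d be the largest element x of P such that ⟨x⟩ is d-distinct (such x exists, e.g. x = s−1). Then ⟨H_d⟩ ∩ E is a nonempty d-distinct interval ideal, and for every nonempty d-distinct interval ideal I, the pair (|I|, I_1) is lexicographically at most (|⟨H_d⟩ ∩ E|, (⟨H_d⟩ ∩ E)_1), where I_1 denotes the first element of I with respect to <_E, compared as an integer. -/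
/-- `m` is the first element of `I` with respect to `<_E`. -/
def IsFirstElt (s k : ℕ) (I : Set ℕ) (m : ℕ) : Prop :=
  m ∈ I ∧ ∀ y ∈ I, y ≠ m → ltE s k m y

/-- index map: `ι a = a*s % (s+k)` -/
def iot (s k a : ℕ) : ℕ := a * s % (s + k)

section Aux
variable {s k : ℕ}

lemma hsn (hk : 0 < k) (hcop : Nat.Coprime s k) : Nat.Coprime s (s+k) := by
  simpa [Nat.coprime_add_self_right] using hcop

lemma small_mem_P (hs : 2 ≤ s) {y : ℕ} (h1 : 0 < y) (h2 : y < s) : y ∈ Pset s k := by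
  refine ⟨h1, ?_⟩
  rintro ⟨a, b, rfl⟩
  rcases Nat.eq_zero_or_pos a with rfl | ha
  · rcases Nat.eq_zero_or_pos b with rfl | hb
    · omega
    · nlinarith
  · nlinarith

lemma P_of_add {x y c e : ℕ} (hx : x ∈ Pset s k) (hy : 0 < y)
    (h : y + c * s + e * (s + k) = x) : y ∈ Pset s k := by
  refine ⟨hy, ?_⟩
  rintro ⟨a, b, rfl⟩
  exact hx.2 ⟨a + c, b + e, by rw [← h]; ring⟩

lemma iot_lt (hs : 2 ≤ s) (hk : 0 < k) (a : ℕ) : iot s k a < s + k :=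
  Nat.mod_lt _ (by omega)

lemma iot_pos (hs : 2 ≤ s) (hk : 0 < k) (hcop : Nat.Coprime s k)
    {a : ℕ} (h1 : 0 < a) (h2 : a < s + k) : 0 < iot s k a := by
  rcases Nat.eq_zero_or_pos (iot s k a) with h | h
  · exfalso
    have hdvd : (s + k) ∣ a * s := Nat.dvd_of_mod_eq_zero h
    have hcop' : Nat.Coprime (s + k) s := ((hsn hk hcop).symm)
    have : (s + k) ∣ a := (Nat.Coprime.dvd_of_dvd_mul_right hcop' hdvd)
    have := Nat.le_of_dvd h1 this
    omega
  · exact h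

lemma iot_inj (hs : 2 ≤ s) (hk : 0 < k) (hcop : Nat.Coprime s k)
    {a b : ℕ} (ha : a < s + k) (hb : b < s + k) (h : iot s k a = iot s k b) : a = b := by
  have hmod : a * s ≡ b * s [MOD (s+k)] := h
  have hcop' : Nat.gcd (s+k) s = 1 := (hsn hk hcop).symm
  have := hmod.cancel_right_of_coprime hcop'
  have h2 : a % (s+k) = b % (s+k) := this
  rwa [Nat.mod_eq_of_lt ha, Nat.mod_eq_of_lt hb] at h2

lemma iot_surj (hs : 2 ≤ s) (hk : 0 < k) (hcop : Nat.Coprime s k)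
    {y : ℕ} (hy : y < s + k) : ∃ a, a < s + k ∧ iot s k a = y := by
  classical
  have hinj : Set.InjOn (fun a => iot s k a) (Finset.range (s+k)) := by
    intro a ha b hb hab
    exact iot_inj hs hk hcop (Finset.mem_range.mp ha) (Finset.mem_range.mp hb) hab
  have hsub : (Finset.range (s+k)).image (fun a => iot s k a) ⊆ Finset.range (s+k) := by
    intro t ht
    obtain ⟨a, _, rfl⟩ := Finset.mem_image.mp ht
    exact Finset.mem_range.mpr (iot_lt hs hk a)
  have hcard : (Finset.range (s+k)).card ≤ ((Finset.range (s+k)).image (fun a => iot s k a)).card := by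
    rw [Finset.card_image_of_injOn hinj]
  have heq := Finset.eq_of_subset_of_card_le hsub hcard
  have : y ∈ (Finset.range (s+k)).image (fun a => iot s k a) := by
    rw [heq]; exact Finset.mem_range.mpr hy
  obtain ⟨a, ha, hay⟩ := Finset.mem_image.mp this
  exact ⟨a, Finset.mem_range.mp ha, hay⟩

/-- division form: `a*s = (s+k)*(a*s/(s+k)) + iot a` -/
lemma iot_div (s k a : ℕ) : a * s = (s + k) * (a * s / (s + k)) + iot s k a :=
  (Nat.div_add_mod _ _).symm

lemma iot_mem_E (hs : 2 ≤ s) (hk : 0 < k) (hcop : Nat.Coprime s k)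
    {a : ℕ} (h1 : 0 < a) (h2 : a ≤ s + k - 1) (h3 : s + k < a * s) :
    iot s k a ∈ Eset s k := by
  have hlt := iot_lt hs hk a
  have hpos := iot_pos hs hk hcop h1 (by omega)
  refine ⟨⟨hpos, ?_⟩, by omega⟩
  rintro ⟨c, e, hce⟩
  have he : e = 0 := by nlinarith
  subst he
  simp only [Nat.zero_mul, Nat.add_zero] at hce
  have hcs : c * s < s + k := by omega
  have hc : c < s + k := by nlinarith
  have hic : iot s k c = c * s := Nat.mod_eq_of_lt hcs
  have : c = a := iot_inj hs hk hcop hc (by omega) (by rw [hic, ← hce])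
  subst this
  omega

lemma exists_idx_of_mem_E (hs : 2 ≤ s) (hk : 0 < k) (hcop : Nat.Coprime s k)
    {y : ℕ} (hy : y ∈ Eset s k) :
    ∃ a, 0 < a ∧ a ≤ s + k - 1 ∧ iot s k a = y ∧ s + k < a * s := by
  obtain ⟨⟨hy0, hyr⟩, hyle⟩ := hy
  obtain ⟨a, ha, hay⟩ := iot_surj hs hk hcop (y := y) (by omega)
  have ha0 : 0 < a := by
    rcases Nat.eq_zero_or_pos a with rfl | h
    · simp [iot] at hay; omega
    · exact h
  refine ⟨a, ha0, by omega, hay, ?_⟩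
  rcases lt_trichotomy (a * s) (s + k) with h | h | h
  · exfalso
    have : iot s k a = a * s := Nat.mod_eq_of_lt h
    exact hyr ⟨a, 0, by omega⟩
  · exfalso
    have : iot s k a = 0 := by rw [iot, h, Nat.mod_self]
    omega
  · exact h

lemma covE_succ (hs : 2 ≤ s) (hk : 0 < k) (hcop : Nat.Coprime s k)
    {a : ℕ} (h1 : 0 < a) (h2 : a + 1 ≤ s + k - 1) (h3 : s + k < a * s) :
    covE s k (iot s k a) (iot s k (a+1)) := by
  have hstep : iot s k (a+1) = (iot s k a + s) % (s + k) := by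
    rw [iot, iot, Nat.add_mul, Nat.one_mul, Nat.add_mod, Nat.mod_eq_of_lt (show s < s + k by omega)]
  have hlt := iot_lt hs hk a
  have hE1 := iot_mem_E hs hk hcop h1 (by omega) h3
  have hE2 := iot_mem_E hs hk hcop (show 0 < a + 1 by omega) h2 (by nlinarith)
  by_cases hcase : iot s k a + s < s + k
  · have : iot s k (a+1) = iot s k a + s := by rw [hstep, Nat.mod_eq_of_lt hcase]
    exact ⟨hE1, hE2, Or.inl this⟩
  · have h2n : iot s k a + s < 2 * (s + k) := by omega
    have : iot s k (a+1) = iot s k a + s - (s + k) := by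
      rw [hstep, Nat.mod_eq_sub_mod (by omega), Nat.mod_eq_of_lt (by omega)]
    exact ⟨hE1, hE2, Or.inr (by omega)⟩

lemma covE_idx (hs : 2 ≤ s) (hk : 0 < k) (hcop : Nat.Coprime s k)
    {p q : ℕ} (h : covE s k p q) {a : ℕ} (h1 : 0 < a) (h2 : a ≤ s + k - 1)
    (h3 : s + k < a * s) (h4 : iot s k a = p) :
    a + 1 ≤ s + k - 1 ∧ iot s k (a+1) = q := by
  obtain ⟨hp, hq, hor⟩ := h
  have hstep : iot s k (a+1) = (iot s k a + s) % (s + k) := by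
    rw [iot, iot, Nat.add_mul, Nat.one_mul, Nat.add_mod, Nat.mod_eq_of_lt (show s < s + k by omega)]
  have hq0 : 0 < q := hq.1.1
  have hqle : q ≤ s + k - 1 := hq.2
  have hiq : iot s k (a+1) = q := by
    rcases hor with h | h
    · rw [hstep, h4, Nat.mod_eq_of_lt (by omega), h]
    · have hpk : iot s k a = q + k := by omega
      rw [hstep, hpk, Nat.mod_eq_sub_mod (by omega), Nat.mod_eq_of_lt (by omega)]
      omega
  have : a + 1 ≠ s + k := by
    intro hcontra
    have : iot s k (a+1) = 0 := by rw [iot, hcontra, Nat.mul_mod_right]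
    omega
  exact ⟨by omega, hiq⟩

lemma ltE_idx_lt (hs : 2 ≤ s) (hk : 0 < k) (hcop : Nat.Coprime s k)
    {p q : ℕ} (h : ltE s k p q) {a : ℕ} (h1 : 0 < a) (h2 : a ≤ s + k - 1)
    (h3 : s + k < a * s) (h4 : iot s k a = p) :
    ∃ b, a < b ∧ b ≤ s + k - 1 ∧ iot s k b = q := by
  induction h with
  | single hcov =>
      obtain ⟨hb, hi⟩ := covE_idx hs hk hcop hcov h1 h2 h3 h4
      exact ⟨a + 1, by omega, hb, hi⟩
  | tail hlt hcov ih =>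
      obtain ⟨b, hab, hble, hib⟩ := ih
      have hbs : s + k < b * s := lt_of_lt_of_le h3 (Nat.mul_le_mul_right s (by omega))
      obtain ⟨hb1, hi1⟩ := covE_idx hs hk hcop hcov (show 0 < b by omega) hble hbs hib
      exact ⟨b + 1, by omega, hb1, hi1⟩

lemma ltE_of_idx_lt (hs : 2 ≤ s) (hk : 0 < k) (hcop : Nat.Coprime s k)
    {a b : ℕ} (h1 : 0 < a) (h2 : a < b) (h3 : b ≤ s + k - 1) (h4 : s + k < a * s) :
    ltE s k (iot s k a) (iot s k b) := by
  induction b with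
  | zero => omega
  | succ b ih =>
      rcases Nat.lt_or_ge a b with hab | hab
      · have hb : b ≤ s + k - 1 := by omega
        exact Relation.TransGen.tail (ih hab hb)
          (covE_succ hs hk hcop (by omega) h3 (lt_of_lt_of_le h4 (Nat.mul_le_mul_right s (by omega))))
      · have : b = a := by omega
        subst this
        exact Relation.TransGen.single (covE_succ hs hk hcop h1 h3 h4)

lemma ltP_dest {z y : ℕ} (h : ltP s k z y) :
    z ∈ Pset s k ∧ ∃ c e : ℕ, 0 < c + e ∧ z + c * s + e * (s + k) = y := by
  induction h with
  | single hcov =>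
      refine ⟨hcov.1, ?_⟩
      rcases hcov.2.2 with h | h
      · exact ⟨1, 0, by omega, by omega⟩
      · exact ⟨0, 1, by omega, by omega⟩
  | tail hlt hcov ih =>
      obtain ⟨hz, c, e, hce, heq⟩ := ih
      refine ⟨hz, ?_⟩
      rcases hcov.2.2 with h | h
      · exact ⟨c + 1, e, by omega, by rw [h, ← heq]; ring⟩
      · exact ⟨c, e + 1, by omega, by rw [h, ← heq]; ring⟩

lemma P_param (hs : 2 ≤ s) (hk : 0 < k) (hcop : Nat.Coprime s k)
    {x : ℕ} (hx : x ∈ Pset s k) :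
    ∃ A B, 0 < A ∧ A ≤ s + k - 1 ∧ 0 < B ∧ x + B * (s + k) = A * s := by
  obtain ⟨hx0, hxr⟩ := hx
  have hr0 : x % (s + k) ≠ 0 := by
    intro h
    exact hxr ⟨0, x / (s+k), by
      have h2 := Nat.div_add_mod x (s+k)
      rw [Nat.zero_mul, Nat.zero_add, Nat.mul_comm]
      omega⟩
  obtain ⟨a, ha, hay⟩ := iot_surj hs hk hcop (y := x % (s+k)) (Nat.mod_lt _ (by omega))
  have ha0 : 0 < a := by
    rcases Nat.eq_zero_or_pos a with rfl | h
    · simp [iot] at hay; omega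
    · exact h
  have hmodeq : a * s % (s + k) = x % (s + k) := hay
  have hxlt : x < a * s := by
    by_contra hcon
    push_neg at hcon
    have hdvd : (s + k) ∣ x - a * s := (Nat.modEq_iff_dvd' hcon).mp hmodeq
    obtain ⟨t, ht⟩ := hdvd
    exact hxr ⟨a, t, by rw [Nat.mul_comm t (s+k)]; omega⟩
  have hdvd : (s + k) ∣ a * s - x := (Nat.modEq_iff_dvd' (by omega)).mp hmodeq.symm
  obtain ⟨B, hB⟩ := hdvd
  have hB0 : 0 < B := by
    rcases Nat.eq_zero_or_pos B with rfl | h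
    · omega
    · exact h
  exact ⟨a, B, ha0, by omega, hB0, by rw [Nat.mul_comm B (s+k)]; omega⟩

lemma mem_genIdeal_iff (hs : 2 ≤ s) (hk : 0 < k) (hcop : Nat.Coprime s k)
    {x A B : ℕ} (hx : x ∈ Pset s k) (hA1 : 0 < A) (hA2 : A ≤ s + k - 1)
    (hB : 0 < B) (hxe : x + B * (s + k) = A * s)
    {y a b : ℕ} (hy : 0 < y) (ha1 : 0 < a) (ha2 : a ≤ s + k - 1)
    (hye : y + b * (s + k) = a * s) :
    y ∈ genIdeal s k x ↔ (a ≤ A ∧ B ≤ b) := by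
  constructor
  · rintro ⟨-, c, e, hce⟩
    have heq1 : (a + c) * s + (e + B) * (s + k) = A * s + b * (s + k) := by
      zify at hce hye hxe ⊢
      linarith
    have hmodeq : (a + c) * s % (s+k) = A * s % (s+k) := by
      have h1 : ((a+c) * s) % (s+k) = ((a+c) * s + (e+B) * (s+k)) % (s+k) := by
        rw [Nat.add_mul_mod_self_right]
      have h2 : (A * s) % (s+k) = (A * s + b * (s+k)) % (s+k) := by
        rw [Nat.add_mul_mod_self_right]
      rw [h1, h2, heq1]
    have hmod2 : (a + c) ≡ A [MOD (s+k)] := by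
      have : (a+c) * s ≡ A * s [MOD (s+k)] := hmodeq
      exact this.cancel_right_of_coprime ((hsn hk hcop).symm)
    have hcb : c * s < x := by omega
    have hxb : x < A * s := by
      have : 0 < B * (s+k) := by positivity
      omega
    have hcA : c < A := by
      by_contra hcon
      push_neg at hcon
      have := Nat.mul_le_mul_right s hcon
      omega
    have : a + c = A ∨ a + c = A + (s + k) := by
      have h1 : (a + c) % (s+k) = A % (s+k) := hmod2
      rw [Nat.mod_eq_of_lt (show A < s + k by omega)] at h1
      rcases Nat.lt_or_ge (a + c) (s+k) with h | h
      · left; rw [Nat.mod_eq_of_lt h] at h1; omega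
      · right
        rw [Nat.mod_eq_sub_mod h, Nat.mod_eq_of_lt (by omega)] at h1
        omega
    rcases this with h | h
    · rw [h] at heq1
      have hb : e + B = b := by
        have h2 := Nat.add_left_cancel heq1
        exact Nat.eq_of_mul_eq_mul_right (by omega) h2
      omega
    · exfalso
      have hbs : b < s := by
        have h1 : b * (s+k) < a * s := by omega
        have h2 : a * s ≤ (s + k) * s := Nat.mul_le_mul_right s (by omega)
        by_contra hcon
        push_neg at hcon
        have h3 := Nat.mul_le_mul_right (s+k) hcon
        have h4 : s * (s+k) = (s+k) * s := Nat.mul_comm _ _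
        omega
      rw [h] at heq1
      have h5 : (s + e + B) * (s + k) = b * (s + k) := by
        zify at heq1 ⊢
        linarith
      have hb : s + e + B = b := Nat.eq_of_mul_eq_mul_right (by omega) h5
      omega
  · rintro ⟨haA, hBb⟩
    refine ⟨hy, A - a, b - B, ?_⟩
    have h1 : (A - a) * s + a * s = A * s := by
      rw [← Nat.add_mul, Nat.sub_add_cancel haA]
    have h2 : (b - B) * (s+k) + B * (s+k) = b * (s+k) := by
      rw [← Nat.add_mul, Nat.sub_add_cancel hBb]
    omega


/-- `x = (x/y)*y + x%y` with products in `q*y` orientation. -/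
lemma divmod' (x y : ℕ) : x = (x/y)*y + x%y := by
  have := Nat.div_add_mod x y
  rw [Nat.mul_comm] at this
  omega

lemma mod_eval {r t y : ℕ} (hr : r < y) : (t*y + r) % y = r := by
  rw [Nat.add_comm, Nat.add_mul_mod_self_right, Nat.mod_eq_of_lt hr]

lemma dd_le {d : ℕ} {S : Set ℕ} (hdd : DDistinct d S) {p q : ℕ}
    (hp : p ∈ S) (hq : q ∈ S) (hne : p ≠ q) (hle : p ≤ q + d) (hge : q ≤ p + d) : False := by
  have h := hdd p hp q hq hne
  have : |(p:ℤ) - (q:ℤ)| ≤ (d:ℤ) := by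
    rw [abs_le]; constructor <;> [push_cast; push_cast] <;> omega
  linarith

lemma dd_gap {d : ℕ} {S : Set ℕ} (hdd : DDistinct d S) {q c : ℕ}
    (hq : q ∈ S) (hp : q + c ∈ S) (hc : 0 < c) : d < c := by
  have h := hdd (q + c) hp q hq (by omega)
  have : ((q + c : ℕ) : ℤ) - (q:ℤ) = (c:ℤ) := by push_cast; ring
  rw [this, abs_of_nonneg (by positivity)] at h
  exact_mod_cast h

lemma colmin_m (hs : 2 ≤ s) (hk : 0 < k) (hcop : Nat.Coprime s k)
    {u B : ℕ} (hu1 : 0 < u) (hu2 : u ≤ s + k - 1) (hB : 0 < B)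
    (hBu : B * (s + k) < u * s) (hBu2 : (u - 1) * s ≤ B * (s + k)) :
    iot s k u + B * (s + k) = u * s ∧ 1 ≤ iot s k u ∧ iot s k u ≤ s - 1 ∧
      s + k < u * s ∧ u * s / (s + k) = B := by
  have hsum : (u - 1) * s + s = u * s := by
    rw [← Nat.succ_mul]
    congr 1
    omega
  have hne : (u - 1) * s ≠ B * (s + k) := by
    intro h
    have hdvd : (s + k) ∣ (u - 1) * s := ⟨B, by rw [h, Nat.mul_comm]⟩
    have hcop' : Nat.Coprime (s + k) s := (hsn hk hcop).symm
    have hdvd2 : (s + k) ∣ (u - 1) := hcop'.dvd_of_dvd_mul_right hdvd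
    rcases Nat.eq_zero_or_pos (u - 1) with h0 | h0
    · rw [h0, Nat.zero_mul] at h
      have : 0 < B * (s + k) := by positivity
      omega
    · have := Nat.le_of_dvd h0 hdvd2
      omega
  -- let r := u*s - B*(s+k); 1 ≤ r ≤ s - 1
  have hr1 : B * (s + k) + 1 ≤ u * s := by omega
  have hr2 : u * s ≤ B * (s + k) + s - 1 := by omega
  have hiot : iot s k u = u * s - B * (s + k) := by
    have h0 : u * s = B * (s+k) + (u * s - B * (s+k)) := by omega
    rw [iot, h0, mod_eval (by omega)]
    omega
  have hdiv : u * s / (s + k) = B := by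
    have h1 : u * s = (u * s - B * (s+k)) + B * (s + k) := by omega
    rw [h1, Nat.add_mul_div_right _ _ (show 0 < s + k by omega),
      Nat.div_eq_of_lt (by omega), Nat.zero_add]
  refine ⟨by omega, by omega, by omega, ?_, hdiv⟩
  have : s + k ≤ B * (s + k) := Nat.le_mul_of_pos_left (s+k) hB
  omega

lemma exists_div (s k x : ℕ) : ∃ b, x * s = b * (s + k) + iot s k x :=
  ⟨_, divmod' _ _⟩

lemma struct_main (hs : 2 ≤ s) (hk : 0 < k) (hcop : Nat.Coprime s k)
    {x A B : ℕ} (hx : x ∈ Pset s k) (hA1 : 0 < A) (hA2 : A ≤ s + k - 1)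
    (hB : 0 < B) (hxe : x + B * (s + k) = A * s) :
    ∃ u m, 0 < u ∧ u ≤ A ∧ m = iot s k u ∧ 1 ≤ m ∧ m ≤ s - 1 ∧
      m + B * (s + k) = u * s ∧ (u - 1) * s ≤ B * (s + k) ∧
      genIdeal s k x ∩ Eset s k = iot s k '' Set.Icc u A ∧
      (genIdeal s k x ∩ Eset s k).ncard = A - u + 1 ∧
      IsFirstElt s k (genIdeal s k x ∩ Eset s k) m ∧
      x = (A - u) * s + m := by
  obtain ⟨q, r, hqr, hrlt⟩ : ∃ q r, B * (s + k) = q * s + r ∧ r < s :=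
    ⟨_, _, divmod' _ _, Nat.mod_lt _ (by omega)⟩
  obtain ⟨u, hudef⟩ : ∃ u, u = q + 1 := ⟨_, rfl⟩
  have hus : u * s = q * s + s := by rw [hudef, Nat.add_mul, Nat.one_mul]
  have hu1 : B * (s + k) < u * s := by omega
  have hu2 : (u - 1) * s ≤ B * (s + k) := by
    have h5 : u - 1 = q := by omega
    rw [h5]; omega
  have huA : u ≤ A := by
    by_contra hcon
    push_neg at hcon
    have h2 := Nat.mul_le_mul_right s (show A ≤ q by omega)
    have : 0 < x := hx.1
    omega
  have hu0 : 0 < u := by omega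
  have huk : u ≤ s + k - 1 := le_trans huA hA2
  obtain ⟨hm_eq, hm1, hm2, hukk, _⟩ := colmin_m hs hk hcop hu0 huk hB hu1 hu2
  -- set equality
  have hseteq : genIdeal s k x ∩ Eset s k = iot s k '' Set.Icc u A := by
    ext y
    constructor
    · rintro ⟨hyg, hyE⟩
      obtain ⟨a, ha0, ha1, hay, has⟩ := exists_idx_of_mem_E hs hk hcop hyE
      obtain ⟨b, hb⟩ := exists_div s k a
      have hye : y + b * (s + k) = a * s := by rw [← hay]; omega
      obtain ⟨haA, hBb⟩ := (mem_genIdeal_iff hs hk hcop hx hA1 hA2 hB hxe hyE.1.1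
        ha0 ha1 hye).mp hyg
      have hau : u ≤ a := by
        have hy0 : 0 < y := hyE.1.1
        by_contra hcon
        push_neg at hcon
        have h3 := Nat.mul_le_mul_right s (show a ≤ u - 1 by omega)
        have h4 := Nat.mul_le_mul_right (s+k) hBb
        omega
      exact ⟨a, Set.mem_Icc.mpr ⟨hau, haA⟩, hay⟩
    · rintro ⟨a, ha, rfl⟩
      rw [Set.mem_Icc] at ha
      have ha0 : 0 < a := by omega
      have ha1 : a ≤ s + k - 1 := le_trans ha.2 hA2
      have hus2 : u * s ≤ a * s := Nat.mul_le_mul_right s ha.1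
      have has : s + k < a * s := by omega
      have hyE : iot s k a ∈ Eset s k := iot_mem_E hs hk hcop ha0 ha1 has
      obtain ⟨b, hb⟩ := exists_div s k a
      have hye : iot s k a + b * (s + k) = a * s := by omega
      have hBb : B ≤ b := by
        by_contra hcon
        push_neg at hcon
        have h3 := Nat.mul_le_mul_right (s+k) (show b + 1 ≤ B by omega)
        rw [Nat.add_mul, Nat.one_mul] at h3
        have h4 := iot_lt hs hk a
        omega
      exact ⟨(mem_genIdeal_iff hs hk hcop hx hA1 hA2 hB hxe hyE.1.1 ha0 ha1 hye).mpr
        ⟨ha.2, hBb⟩, hyE⟩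
  have hinj : Set.InjOn (iot s k) (Set.Icc u A) := by
    intro p hp q2 hq hpq
    rw [Set.mem_Icc] at hp hq
    exact iot_inj hs hk hcop (by omega) (by omega) hpq
  have hncard : (genIdeal s k x ∩ Eset s k).ncard = A - u + 1 := by
    rw [hseteq, Set.ncard_image_of_injOn hinj]
    rw [← Finset.coe_Icc, Set.ncard_coe_finset, Nat.card_Icc]
    omega
  have hfirst : IsFirstElt s k (genIdeal s k x ∩ Eset s k) (iot s k u) := by
    constructor
    · rw [hseteq]
      exact ⟨u, Set.mem_Icc.mpr ⟨le_refl u, huA⟩, rfl⟩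
    · intro y hy hne
      rw [hseteq] at hy
      obtain ⟨b, hb, rfl⟩ := hy
      rw [Set.mem_Icc] at hb
      have : u ≠ b := fun h => hne (by rw [h])
      exact ltE_of_idx_lt hs hk hcop hu0 (by omega) (by omega) hukk
  refine ⟨u, iot s k u, hu0, huA, rfl, hm1, hm2, hm_eq, hu2, hseteq, hncard, hfirst, ?_⟩
  have h1 : (A - u) * s + u * s = A * s := by
    rw [← Nat.add_mul]
    congr 1
    omega
  omega

lemma ltE_mem_right {p q : ℕ} (h : ltE s k p q) : q ∈ Eset s k := by
  induction h with
  | single hcov => exact hcov.2.1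
  | tail _ hcov _ => exact hcov.2.1

lemma ltE_mem_left {p q : ℕ} (h : ltE s k p q) : p ∈ Eset s k := by
  induction h with
  | single hcov => exact hcov.1
  | tail _ _ ih => exact ih

lemma first_unique (hs : 2 ≤ s) (hk : 0 < k) (hcop : Nat.Coprime s k)
    {I : Set ℕ} (hI : I ⊆ Eset s k) {m m' : ℕ}
    (h : IsFirstElt s k I m) (h' : IsFirstElt s k I m') : m = m' := by
  by_contra hne
  have h1 : ltE s k m m' := h.2 m' h'.1 (Ne.symm hne)
  have h2 : ltE s k m' m := h'.2 m h.1 hne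
  obtain ⟨a, ha0, ha1, ham, has⟩ := exists_idx_of_mem_E hs hk hcop (hI h.1)
  obtain ⟨b, hab, hb1, hbm⟩ := ltE_idx_lt hs hk hcop h1 ha0 ha1 has ham
  have hbs : s + k < b * s := lt_of_lt_of_le has (Nat.mul_le_mul_right s (by omega))
  obtain ⟨c, hbc, hc1, hcm⟩ := ltE_idx_lt hs hk hcop h2 (by omega) hb1 hbs hbm
  have : a = c := iot_inj hs hk hcop (by omega) (by omega) (by rw [ham, hcm])
  omega

lemma intervalIdeal_struct (hs : 2 ≤ s) (hk : 0 < k) (hcop : Nat.Coprime s k)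
    {I : Set ℕ} (hII : IsIntervalIdeal s k I) (hne : I.Nonempty) :
    ∃ u v B, 0 < u ∧ u ≤ v ∧ v ≤ s + k - 1 ∧ 0 < B ∧
      B * (s + k) < u * s ∧ (u - 1) * s ≤ B * (s + k) ∧ s + k < u * s ∧
      I = iot s k '' Set.Icc u v ∧ I.ncard = v - u + 1 ∧
      IsFirstElt s k I (iot s k u) := by
  classical
  obtain ⟨hIE, hIint, hIdc⟩ := hII
  set T : Finset ℕ := (Finset.Icc 1 (s + k - 1)).filter
    (fun a => iot s k a ∈ I ∧ s + k < a * s) with hTdef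
  have hmemT : ∀ a, a ∈ T ↔ (1 ≤ a ∧ a ≤ s + k - 1 ∧ iot s k a ∈ I ∧ s + k < a * s) := by
    intro a
    simp [hTdef, Finset.mem_filter, Finset.mem_Icc, and_assoc]
  have hTne : T.Nonempty := by
    obtain ⟨y, hy⟩ := hne
    obtain ⟨a, ha0, ha1, hay, has⟩ := exists_idx_of_mem_E hs hk hcop (hIE hy)
    exact ⟨a, (hmemT a).mpr ⟨ha0, ha1, by rwa [hay], has⟩⟩
  set u := T.min' hTne with hudef
  set v := T.max' hTne with hvdef
  have huT := (hmemT u).mp (T.min'_mem hTne)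
  have hvT := (hmemT v).mp (T.max'_mem hTne)
  have huv : u ≤ v := T.min'_le _ (T.max'_mem hTne)
  have hIcc : ∀ a, u ≤ a → a ≤ v → a ∈ T := by
    intro a hua hav
    rcases eq_or_lt_of_le hua with rfl | hua'
    · exact T.min'_mem hTne
    rcases eq_or_lt_of_le hav with rfl | hav'
    · exact T.max'_mem hTne
    have has : s + k < a * s := lt_of_lt_of_le huT.2.2.2 (Nat.mul_le_mul_right s (by omega))
    have haE : iot s k a ∈ Eset s k := iot_mem_E hs hk hcop (by omega) (by omega) has
    have h1 : ltE s k (iot s k u) (iot s k a) :=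
      ltE_of_idx_lt hs hk hcop huT.1 hua' (by omega) huT.2.2.2
    have h2 : ltE s k (iot s k a) (iot s k v) :=
      ltE_of_idx_lt hs hk hcop (by omega) hav' hvT.2.1 has
    have := hIint _ huT.2.2.1 _ hvT.2.2.1 _ h1 h2
    exact (hmemT a).mpr ⟨by omega, by omega, this, has⟩
  have hseteq : I = iot s k '' Set.Icc u v := by
    ext y
    constructor
    · intro hy
      obtain ⟨a, ha0, ha1, hay, has⟩ := exists_idx_of_mem_E hs hk hcop (hIE hy)
      have haT : a ∈ T := (hmemT a).mpr ⟨ha0, ha1, by rwa [hay], has⟩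
      exact ⟨a, Set.mem_Icc.mpr ⟨T.min'_le _ haT, T.le_max' _ haT⟩, hay⟩
    · rintro ⟨a, ha, rfl⟩
      rw [Set.mem_Icc] at ha
      exact ((hmemT a).mp (hIcc a ha.1 ha.2)).2.2.1
  -- B
  obtain ⟨B, hB⟩ := exists_div s k u
  have hiotu_pos : 0 < iot s k u := iot_pos hs hk hcop (by omega) (by omega)
  have hiotu_lt : iot s k u < s + k := iot_lt hs hk u
  have hBpos : 0 < B := by
    rcases Nat.eq_zero_or_pos B with rfl | h
    · rw [Nat.zero_mul, Nat.zero_add] at hB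
      omega
    · exact h
  have hBu : B * (s + k) < u * s := by omega
  have hBu2 : (u - 1) * s ≤ B * (s + k) := by
    by_contra hcon
    push_neg at hcon
    have hskB : s + k ≤ B * (s + k) := Nat.le_mul_of_pos_left (s+k) hBpos
    have hu1' : 1 ≤ u - 1 := by
      rcases Nat.eq_zero_or_pos (u - 1) with h0 | h0
      · rw [h0, Nat.zero_mul] at hcon; omega
      · exact h0
    obtain ⟨b2, hb2⟩ := exists_div s k (u - 1)
    have hilt := iot_lt hs hk (u - 1) (k := k)
    have hb2B : b2 = B := by
      by_contra hne2
      rcases lt_or_gt_of_ne hne2 with h | h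
      · have h3 := Nat.mul_le_mul_right (s+k) (show b2 + 1 ≤ B by omega)
        rw [Nat.add_mul, Nat.one_mul] at h3
        omega
      · have h3 := Nat.mul_le_mul_right (s+k) (show B + 1 ≤ b2 by omega)
        rw [Nat.add_mul, Nat.one_mul] at h3
        have h4 : (u - 1) * s < u * s := by
          have := Nat.mul_le_mul_right s (show u - 1 + 1 ≤ u by omega)
          rw [Nat.add_mul, Nat.one_mul] at this
          omega
        omega
    have hsum : (u - 1) * s + s = u * s := by
      rw [← Nat.succ_mul]
      congr 1
      omega
    have hprevE : iot s k (u - 1) ∈ Eset s k :=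
      iot_mem_E hs hk hcop hu1' (by omega) (by omega)
    have hcovP : covP s k (iot s k (u - 1)) (iot s k u) := by
      refine ⟨hprevE.1, (hIE huT.2.2.1).1, Or.inl ?_⟩
      rw [hb2B] at hb2
      omega
    have hmem := hIdc _ huT.2.2.1 _ (Relation.TransGen.single hcovP)
    have hT2 : u - 1 ∈ T := (hmemT _).mpr ⟨hu1', by omega, hmem, by omega⟩
    have := T.min'_le _ hT2
    omega
  have hinj : Set.InjOn (iot s k) (Set.Icc u v) := by
    intro p hp q2 hq hpq
    rw [Set.mem_Icc] at hp hq
    exact iot_inj hs hk hcop (by omega) (by omega) hpq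
  have hncard : I.ncard = v - u + 1 := by
    rw [hseteq, Set.ncard_image_of_injOn hinj]
    rw [← Finset.coe_Icc, Set.ncard_coe_finset, Nat.card_Icc]
    omega
  have hfirst : IsFirstElt s k I (iot s k u) := by
    constructor
    · exact huT.2.2.1
    · intro y hy hne2
      rw [hseteq] at hy
      obtain ⟨b3, hb3, rfl⟩ := hy
      rw [Set.mem_Icc] at hb3
      have : u ≠ b3 := fun h => hne2 (by rw [h])
      exact ltE_of_idx_lt hs hk hcop (by omega) (by omega) (by omega) huT.2.2.2
  exact ⟨u, v, B, by omega, huv, hvT.2.1, hBpos, hBu, hBu2, huT.2.2.2,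
    hseteq, hncard, hfirst⟩

lemma colmin_w (hs : 2 ≤ s) (hk : 0 < k) (hcop : Nat.Coprime s k) (d : ℕ)
    {u v B a : ℕ} (hu : 0 < u) (huv : u ≤ v) (hv : v ≤ s + k - 1) (hB : 0 < B)
    (hBu : B * (s + k) < u * s) (hBu2 : (u - 1) * s ≤ B * (s + k))
    (hI : DDistinct d (iot s k '' Set.Icc u v))
    (hau : u ≤ a) (hav : a ≤ v) {fa : ℕ}
    (hfa : a * s = fa * (s + k) + iot s k a) (hfaB : B + 1 ≤ fa) :
    ∃ w, u < w ∧ w ≤ a ∧ 1 ≤ iot s k w ∧ iot s k w ≤ s - 1 ∧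
      iot s k w ≤ iot s k a ∧ w * s = fa * (s + k) + iot s k w ∧ d < k ∧ d < s := by
  obtain ⟨hm_eq, hm1, hm2, hukk, _⟩ := colmin_m hs hk hcop hu (by omega) hB hBu hBu2
  have hiota_pos : 0 < iot s k a := iot_pos hs hk hcop (by omega) (by omega)
  have hiota_lt : iot s k a < s + k := iot_lt hs hk a
  obtain ⟨q, r, hq, hr⟩ : ∃ q r, fa * (s + k) = q * s + r ∧ r < s :=
    ⟨_, _, divmod' _ _, Nat.mod_lt _ (by omega)⟩
  obtain ⟨w, hwdef⟩ : ∃ w, w = q + 1 := ⟨_, rfl⟩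
  have hws : w * s = q * s + s := by rw [hwdef, Nat.add_mul, Nat.one_mul]
  have hf1 : fa * (s + k) < w * s := by omega
  have hwa : w ≤ a := by
    by_contra hcon
    push_neg at hcon
    have h2 := Nat.mul_le_mul_right s (show a ≤ q by omega)
    omega
  have huw : u < w := by
    by_contra hcon
    push_neg at hcon
    have h2 := Nat.mul_le_mul_right s hcon
    have h3 := Nat.mul_le_mul_right (s+k) (show B + 1 ≤ fa by omega)
    rw [Nat.add_mul, Nat.one_mul] at h3
    omega
  -- iot w = w*s - fa*(s+k) ∈ [1, s-1]
  have hro_ne : q * s ≠ fa * (s + k) := by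
    intro h
    have hdvd : (s + k) ∣ q * s := ⟨fa, by rw [h, Nat.mul_comm]⟩
    have hdvd2 : (s + k) ∣ q := ((hsn hk hcop).symm).dvd_of_dvd_mul_right hdvd
    rcases Nat.eq_zero_or_pos q with h0 | h0
    · rw [h0, Nat.zero_mul] at h
      have : s + k ≤ fa * (s+k) := Nat.le_mul_of_pos_left (s+k) (by omega)
      omega
    · have := Nat.le_of_dvd h0 hdvd2
      omega
  have hiotw : iot s k w = w * s - fa * (s + k) := by
    have h0 : w * s = fa * (s + k) + (w * s - fa * (s + k)) := by omega
    rw [iot, h0, mod_eval (by omega)]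
    omega
  have hw1 : 1 ≤ iot s k w := by omega
  have hw2 : iot s k w ≤ s - 1 := by omega
  have hweq : w * s = fa * (s + k) + iot s k w := by omega
  have hwa2 : iot s k w ≤ iot s k a := by
    have h2 := Nat.mul_le_mul_right s hwa
    omega
  -- iot (w-1) = iot w + k
  have hsum1 : (w - 1) * s + s = w * s := by
    rw [← Nat.succ_mul]; congr 1; omega
  have hsum2 : (fa - 1) * (s + k) + (s + k) = fa * (s + k) := by
    rw [← Nat.succ_mul]; congr 1; omega
  have hprev : iot s k (w - 1) = iot s k w + k := by
    have h0 : (w - 1) * s = (fa - 1) * (s + k) + (iot s k w + k) := by omega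
    rw [iot, h0, mod_eval (by omega)]
  -- d < k via pair (iot w, iot (w-1))
  have hmemw : iot s k w ∈ iot s k '' Set.Icc u v :=
    ⟨w, Set.mem_Icc.mpr ⟨by omega, by omega⟩, rfl⟩
  have hmemw1 : iot s k w + k ∈ iot s k '' Set.Icc u v :=
    ⟨w - 1, Set.mem_Icc.mpr ⟨by omega, by omega⟩, hprev⟩
  have hdk : d < k := dd_gap hI hmemw hmemw1 hk
  -- d < s via pair (iot u, iot w)
  have hmemu : iot s k u ∈ iot s k '' Set.Icc u v :=
    ⟨u, Set.mem_Icc.mpr ⟨le_refl u, by omega⟩, rfl⟩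
  have hneuw : iot s k u ≠ iot s k w := by
    intro h
    have := iot_inj hs hk hcop (show u < s + k by omega) (show w < s + k by omega) h
    omega
  have hds : d < s := by
    by_contra hcon
    push_neg at hcon
    exact dd_le hI hmemu hmemw hneuw (by omega) (by omega)
  exact ⟨w, huw, hwa, hw1, hw2, hwa2, hweq, hdk, hds⟩

lemma crux_core (hs : 2 ≤ s) (hk : 0 < k) (hcop : Nat.Coprime s k) (d : ℕ)
    {u v B : ℕ} (hu : 0 < u) (huv : u ≤ v) (hv : v ≤ s + k - 1) (hB : 0 < B)
    (hBu : B * (s + k) < u * s) (hBu2 : (u - 1) * s ≤ B * (s + k))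
    (hI : DDistinct d (iot s k '' Set.Icc u v))
    {a₁ a₂ j₁ fa₁ : ℕ} (ha₁u : u ≤ a₁) (ha₁v : a₁ ≤ v) (ha₂u : u ≤ a₂) (ha₂v : a₂ ≤ v)
    (hfa₁ : a₁ * s = fa₁ * (s + k) + iot s k a₁) (hfaB : B + j₁ ≤ fa₁) (hj₁ : 1 ≤ j₁)
    (hane : a₁ ≠ a₂)
    (hclose : iot s k a₁ + (s + k) ≤ iot s k a₂ + d) : False := by
  obtain ⟨hm_eq, hm1, hm2, hukk, _⟩ := colmin_m hs hk hcop hu (by omega) hB hBu hBu2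
  obtain ⟨w, huw, hwa, hw1, hw2, hwa2, hweq, hdk, hds⟩ :=
    colmin_w hs hk hcop d hu huv hv hB hBu hBu2 hI ha₁u ha₁v hfa₁ (by omega)
  have hi2pos : 0 < iot s k a₂ := iot_pos hs hk hcop (by omega) (by omega)
  have hi2lt : iot s k a₂ < s + k := iot_lt hs hk a₂
  have hi1pos : 0 < iot s k a₁ := iot_pos hs hk hcop (by omega) (by omega)
  have hi1lt : iot s k a₁ < s + k := iot_lt hs hk a₁
  -- gap: iot a₂ ≥ iot w + (s+k) - d
  have hgap : iot s k w + (s + k) ≤ iot s k a₂ + d := by omega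
  have hi1d : iot s k a₁ + 1 ≤ d := by omega
  have hiwd : iot s k w + 1 ≤ d := by omega
  have hwne : w ≠ a₂ := by
    intro h
    rw [h] at hgap
    omega
  have hmwne : iot s k u ≠ iot s k w := by
    intro h
    have := iot_inj hs hk hcop (show u < s + k by omega) (show w < s + k by omega) h
    omega
  obtain ⟨f₂, hf₂⟩ := exists_div s k a₂
  have hmemu : iot s k u ∈ iot s k '' Set.Icc u v :=
    ⟨u, Set.mem_Icc.mpr ⟨le_refl u, by omega⟩, rfl⟩
  have hmem2 : iot s k a₂ ∈ iot s k '' Set.Icc u v :=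
    ⟨a₂, Set.mem_Icc.mpr ⟨ha₂u, ha₂v⟩, rfl⟩
  rcases lt_or_gt_of_ne hwne with hlt | hgt
  · -- a₂ > w
    obtain ⟨j', hj'def⟩ : ∃ j', j' = u + (a₂ - w) := ⟨_, rfl⟩
    have hj'u : u < j' := by omega
    have hj'v : j' ≤ v := by omega
    have hf₂fa : fa₁ ≤ f₂ := by
      by_contra hcon
      push_neg at hcon
      have h3 := Nat.mul_le_mul_right (s+k) (show f₂ + 1 ≤ fa₁ by omega)
      rw [Nat.add_mul, Nat.one_mul] at h3
      have h4 := Nat.mul_le_mul_right s (show w + 1 ≤ a₂ by omega)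
      rw [Nat.add_mul, Nat.one_mul] at h4
      omega
    obtain ⟨t, htdef⟩ : ∃ t, t = B + (f₂ - fa₁) := ⟨_, rfl⟩
    obtain ⟨W, hWdef⟩ : ∃ W, W = iot s k u + (iot s k a₂ - iot s k w) := ⟨_, rfl⟩
    have hj's : j' * s = t * (s + k) + W := by
      have he1 : j' * s = u * s + (a₂ - w) * s := by rw [hj'def, Nat.add_mul]
      have he2 : (a₂ - w) * s + w * s = a₂ * s := by
        rw [← Nat.add_mul]; congr 1; omega
      have he3 : (t + fa₁) * (s + k) = (B + f₂) * (s + k) := by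
        rw [show t + fa₁ = B + f₂ by omega]
      rw [Nat.add_mul, Nat.add_mul] at he3
      omega
    rcases Nat.lt_or_ge W (s + k) with hWlt | hWge
    · have hiotj' : iot s k j' = W := by
        rw [iot, hj's, mod_eval hWlt]
      have hmd : iot s k u + 1 ≤ d := by omega
      have hmemj' : iot s k j' ∈ iot s k '' Set.Icc u v :=
        ⟨j', Set.mem_Icc.mpr ⟨by omega, hj'v⟩, rfl⟩
      rw [hiotj'] at hmemj'
      have hWne : W ≠ iot s k a₂ := by omega
      exact dd_le hI hmemj' hmem2 hWne (by omega) (by omega)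
    · have hiotj' : iot s k j' = W - (s + k) := by
        have h0 : j' * s = (t + 1) * (s + k) + (W - (s + k)) := by
          rw [Nat.add_mul, Nat.one_mul]
          omega
        rw [iot, h0, mod_eval (by omega)]
      have hmemj' : iot s k j' ∈ iot s k '' Set.Icc u v :=
        ⟨j', Set.mem_Icc.mpr ⟨by omega, hj'v⟩, rfl⟩
      rw [hiotj'] at hmemj'
      have hWne : W - (s + k) ≠ iot s k u := by omega
      exact dd_le hI hmemj' hmemu hWne (by omega) (by omega)
  · -- a₂ < w
    obtain ⟨j', hj'def⟩ : ∃ j', j' = u + (w - a₂) := ⟨_, rfl⟩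
    have hj'u : u < j' := by omega
    have hj'v : j' ≤ v := by omega
    have hf₂fa : f₂ ≤ fa₁ := by
      by_contra hcon
      push_neg at hcon
      have h3 := Nat.mul_le_mul_right (s+k) (show fa₁ + 1 ≤ f₂ by omega)
      rw [Nat.add_mul, Nat.one_mul] at h3
      have h4 := Nat.mul_le_mul_right s (show a₂ + 1 ≤ w by omega)
      rw [Nat.add_mul, Nat.one_mul] at h4
      omega
    obtain ⟨t, htdef⟩ : ∃ t, t = B + (fa₁ - f₂) - 1 := ⟨_, rfl⟩
    obtain ⟨V, hVdef⟩ : ∃ V, V = iot s k u + (s + k) - (iot s k a₂ - iot s k w) := ⟨_, rfl⟩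
    have hVlt : V < s + k := by omega
    have hj's : j' * s = t * (s + k) + V := by
      have he1 : j' * s = u * s + (w - a₂) * s := by rw [hj'def, Nat.add_mul]
      have he2 : (w - a₂) * s + a₂ * s = w * s := by
        rw [← Nat.add_mul]; congr 1; omega
      have he3 : (t + f₂ + 1) * (s + k) = (B + fa₁) * (s + k) := by
        rw [show t + f₂ + 1 = B + fa₁ by omega]
      rw [Nat.add_mul, Nat.add_mul, Nat.add_mul, Nat.one_mul] at he3
      omega
    have hiotj' : iot s k j' = V := by
      rw [iot, hj's, mod_eval hVlt]
    have hmemj' : iot s k j' ∈ iot s k '' Set.Icc u v :=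
      ⟨j', Set.mem_Icc.mpr ⟨by omega, hj'v⟩, rfl⟩
    rw [hiotj'] at hmemj'
    have hVne : V ≠ iot s k u := by omega
    exact dd_le hI hmemj' hmemu hVne (by omega) (by omega)

lemma crux (hs : 2 ≤ s) (hk : 0 < k) (hcop : Nat.Coprime s k) (d : ℕ)
    {u v B x₀ : ℕ} (hu : 0 < u) (huv : u ≤ v) (hv : v ≤ s + k - 1) (hB : 0 < B)
    (hBu : B * (s + k) < u * s) (hBu2 : (u - 1) * s ≤ B * (s + k))
    (hI : DDistinct d (iot s k '' Set.Icc u v))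
    (hxe : x₀ + B * (s + k) = v * s) :
    DDistinct d (genIdeal s k x₀) := by
  have hx0v : x₀ < v * s := by
    have : s + k ≤ B * (s + k) := Nat.le_mul_of_pos_left (s+k) hB
    omega
  have dec : ∀ y ∈ genIdeal s k x₀, ∃ a j f, u ≤ a ∧ a ≤ v ∧
      y = iot s k a + j * (s + k) ∧ a * s = f * (s + k) + iot s k a ∧ B + j ≤ f := by
    rintro y ⟨hy0, c, e, hce⟩
    have hcs : c * s < v * s := by omega
    have hcv : c < v := lt_of_mul_lt_mul_right hcs (Nat.zero_le s)
    obtain ⟨a, hadef⟩ : ∃ a, a = v - c := ⟨_, rfl⟩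
    have hsum : a * s + c * s = v * s := by
      rw [hadef, ← Nat.add_mul]; congr 1; omega
    obtain ⟨bb, hbbdef⟩ : ∃ bb, bb = B + e := ⟨_, rfl⟩
    have hbbex : bb * (s + k) = B * (s + k) + e * (s + k) := by
      rw [hbbdef, Nat.add_mul]
    have hyb : y + bb * (s + k) = a * s := by omega
    obtain ⟨f, hf⟩ := exists_div s k a
    have hialt : iot s k a < s + k := iot_lt hs hk a
    have hbf : bb ≤ f := by
      by_contra hcon
      push_neg at hcon
      have h3 := Nat.mul_le_mul_right (s+k) (show f + 1 ≤ bb by omega)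
      rw [Nat.add_mul, Nat.one_mul] at h3
      omega
    have hau : u ≤ a := by
      by_contra hcon
      push_neg at hcon
      have h3 := Nat.mul_le_mul_right s (show a ≤ u - 1 by omega)
      have h4 := Nat.mul_le_mul_right (s+k) (show B ≤ bb by omega)
      omega
    have hjex : (f - bb) * (s + k) + bb * (s + k) = f * (s + k) := by
      rw [← Nat.add_mul]; congr 1; omega
    exact ⟨a, f - bb, f, hau, by omega, by omega, hf, by omega⟩
  intro y₁ hy₁ y₂ hy₂ hne
  obtain ⟨a₁, j₁, f₁, ha₁u, ha₁v, hy₁e, hf₁, hj₁f⟩ := dec y₁ hy₁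
  obtain ⟨a₂, j₂, f₂, ha₂u, ha₂v, hy₂e, hf₂, hj₂f⟩ := dec y₂ hy₂
  by_contra hcon
  push_neg at hcon
  rw [abs_le] at hcon
  obtain ⟨hc1, hc2⟩ := hcon
  have hle1 : y₁ ≤ y₂ + d := by omega
  have hle2 : y₂ ≤ y₁ + d := by omega
  clear hc1 hc2
  have hi1pos : 0 < iot s k a₁ := iot_pos hs hk hcop (by omega) (by omega)
  have hi1lt : iot s k a₁ < s + k := iot_lt hs hk a₁
  have hi2pos : 0 < iot s k a₂ := iot_pos hs hk hcop (by omega) (by omega)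
  have hi2lt : iot s k a₂ < s + k := iot_lt hs hk a₂
  -- symmetric main case handler: j₁' > j₂'
  have sym : ∀ b₁ b₂ i₁ i₂ g₁ : ℕ, u ≤ b₁ → b₁ ≤ v → u ≤ b₂ → b₂ ≤ v →
      b₁ * s = g₁ * (s + k) + iot s k b₁ → B + i₁ ≤ g₁ → i₂ < i₁ →
      iot s k b₁ + i₁ * (s + k) ≤ iot s k b₂ + i₂ * (s + k) + d →
      iot s k b₂ + i₂ * (s + k) ≤ iot s k b₁ + i₁ * (s + k) + d → False := by
    intro b₁ b₂ i₁ i₂ g₁ hb₁u hb₁v hb₂u hb₂v hg₁ hig hii hl1 hl2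
    obtain ⟨w, huw, hwa, hw1, hw2, hwa2, hweq, hdk, hds⟩ :=
      colmin_w hs hk hcop d hu huv hv hB hBu hBu2 hI hb₁u hb₁v hg₁ (by omega)
    have hb1pos : 0 < iot s k b₁ := iot_pos hs hk hcop (by omega) (by omega)
    have hb1lt : iot s k b₁ < s + k := iot_lt hs hk b₁
    have hb2pos : 0 < iot s k b₂ := iot_pos hs hk hcop (by omega) (by omega)
    have hb2lt : iot s k b₂ < s + k := iot_lt hs hk b₂
    rcases Nat.lt_or_ge i₂ (i₁ - 1) with hi2 | hi2
    · -- i₁ ≥ i₂ + 2 : distance ≥ 2n - (n-1) > d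
      have h3 := Nat.mul_le_mul_right (s+k) (show i₂ + 2 ≤ i₁ by omega)
      rw [Nat.add_mul] at h3
      omega
    · -- i₁ = i₂ + 1
      have hi1eq : i₁ = i₂ + 1 := by omega
      rw [hi1eq, Nat.add_mul, Nat.one_mul] at hl1
      by_cases hbeq : b₁ = b₂
      · rw [hbeq] at hl1
        omega
      · exact crux_core hs hk hcop d hu huv hv hB hBu hBu2 hI (j₁ := i₁) hb₁u hb₁v hb₂u hb₂v
          hg₁ (by omega) (by omega) hbeq (by omega)
  rcases Nat.lt_trichotomy j₁ j₂ with hj | hj | hj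
  · exact sym a₂ a₁ j₂ j₁ f₂ ha₂u ha₂v ha₁u ha₁v hf₂ hj₂f hj (by omega) (by omega)
  · -- j₁ = j₂
    by_cases haeq : a₁ = a₂
    · apply hne
      rw [hy₁e, hy₂e, haeq, hj]
    · have hne2 : iot s k a₁ ≠ iot s k a₂ := by
        intro h
        exact haeq (iot_inj hs hk hcop (by omega) (by omega) h)
      have hmem1 : iot s k a₁ ∈ iot s k '' Set.Icc u v :=
        ⟨a₁, Set.mem_Icc.mpr ⟨ha₁u, ha₁v⟩, rfl⟩
      have hmem2 : iot s k a₂ ∈ iot s k '' Set.Icc u v :=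
        ⟨a₂, Set.mem_Icc.mpr ⟨ha₂u, ha₂v⟩, rfl⟩
      rw [hj] at hy₁e
      exact dd_le hI hmem1 hmem2 hne2 (by omega) (by omega)
  · exact sym a₁ a₂ j₁ j₂ f₁ ha₁u ha₁v ha₂u ha₂v hf₁ hj₁f hj (by omega) (by omega)

end Aux

theorem best_interval_ideal_lex (s k d : ℕ) (hs : 2 ≤ s) (hk : 0 < k) (hd : 0 < d)
    (hcop : Nat.Coprime s k) (H : ℕ)
    (hH : IsGreatest {x | x ∈ Pset s k ∧ DDistinct d (genIdeal s k x)} H) :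
    (genIdeal s k H ∩ Eset s k).Nonempty ∧
    IsIntervalIdeal s k (genIdeal s k H ∩ Eset s k) ∧
    DDistinct d (genIdeal s k H ∩ Eset s k) ∧
    ∀ I : Set ℕ, IsIntervalIdeal s k I → I.Nonempty → DDistinct d I →
      ∀ m mH : ℕ, IsFirstElt s k I m →
        IsFirstElt s k (genIdeal s k H ∩ Eset s k) mH →
        I.ncard < (genIdeal s k H ∩ Eset s k).ncard ∨
          (I.ncard = (genIdeal s k H ∩ Eset s k).ncard ∧ m ≤ mH) := by
  obtain ⟨⟨hHP, hHdd⟩, hHub⟩ := hH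
  obtain ⟨A, B, hA1, hA2, hB, hxe⟩ := P_param hs hk hcop hHP
  obtain ⟨uH, mH', huH0, huHA, hmHdef, hmH1, hmH2, hmHe, huH2, hJeq, hJcard, hJfirst, hHval⟩ :=
    struct_main hs hk hcop hHP hA1 hA2 hB hxe
  have huHs : s + k < uH * s := by
    have : s + k ≤ B * (s + k) := Nat.le_mul_of_pos_left (s+k) hB
    omega
  refine ⟨⟨mH', hJfirst.1⟩, ⟨Set.inter_subset_right, ?_, ?_⟩, ?_, ?_⟩
  · -- interval property
    intro x hx y hy z hxz hzy
    rw [hJeq] at hx hy ⊢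
    obtain ⟨ax, hax, haxe⟩ := hx
    obtain ⟨ay, hay, haye⟩ := hy
    rw [Set.mem_Icc] at hax hay
    have haxs : s + k < ax * s :=
      lt_of_lt_of_le huHs (Nat.mul_le_mul_right s hax.1)
    obtain ⟨bz, haxbz, hbz1, hbze⟩ :=
      ltE_idx_lt hs hk hcop hxz (by omega) (by omega) haxs haxe
    have hbzs : s + k < bz * s :=
      lt_of_lt_of_le haxs (Nat.mul_le_mul_right s (by omega))
    obtain ⟨cy, hbzcy, hcy1, hcye⟩ :=
      ltE_idx_lt hs hk hcop hzy (by omega) hbz1 hbzs hbze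
    have hcyay : cy = ay :=
      iot_inj hs hk hcop (by omega) (by omega) (hcye.trans haye.symm)
    exact ⟨bz, Set.mem_Icc.mpr ⟨by omega, by omega⟩, hbze⟩
  · -- downward closed
    intro x hx y hy
    obtain ⟨hyP, c, e, hce, hcee⟩ := ltP_dest hy
    obtain ⟨hxg, hxE⟩ := hx
    obtain ⟨hx0, c', e', hc'e⟩ := hxg
    have hex1 : (c + c') * s = c * s + c' * s := Nat.add_mul _ _ _
    have hex2 : (e + e') * (s + k) = e * (s + k) + e' * (s + k) := Nat.add_mul _ _ _
    have hpos : 0 < c * s + e * (s + k) := by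
      rcases Nat.eq_zero_or_pos c with rfl | hc
      · have : s + k ≤ e * (s + k) := Nat.le_mul_of_pos_left (s+k) (by omega)
        omega
      · have : s ≤ c * s := Nat.le_mul_of_pos_left s hc
        omega
    exact ⟨⟨hyP.1, c + c', e + e', by omega⟩, ⟨hyP, by
      have := hxE.2
      omega⟩⟩
  · -- d-distinct
    intro x hx y hy hne
    exact hHdd x hx.1 y hy.1 hne
  · -- lex-maximality
    intro I hII hne hdd m mHx hm hmHf
    have hmHeq : mHx = mH' :=
      first_unique hs hk hcop Set.inter_subset_right hmHf hJfirst
    obtain ⟨u, v, B', hu0, huv, hv, hB', hBu, hBu2, hukk, hIeq, hIcard, hIfirst⟩ :=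
      intervalIdeal_struct hs hk hcop hII hne
    have hmeq : m = iot s k u := first_unique hs hk hcop hII.1 hm hIfirst
    obtain ⟨hm_eq2, hm1, hm2, _, _⟩ := colmin_m hs hk hcop hu0 (by omega) hB' hBu hBu2
    obtain ⟨x₀, hx₀def⟩ : ∃ x₀, x₀ = (v - u) * s + iot s k u := ⟨_, rfl⟩
    have hsum : (v - u) * s + u * s = v * s := by
      rw [← Nat.add_mul]; congr 1; omega
    have hx₀e : x₀ + B' * (s + k) = v * s := by omega
    have hx₀lt : x₀ < v * s := by
      have : s + k ≤ B' * (s + k) := Nat.le_mul_of_pos_left (s+k) hB'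
      omega
    have hx₀P : x₀ ∈ Pset s k := by
      refine ⟨by omega, ?_⟩
      rintro ⟨c, e, hce⟩
      have heq2 : c * s + (e + B') * (s + k) = v * s := by
        have : (e + B') * (s + k) = e * (s + k) + B' * (s + k) := Nat.add_mul _ _ _
        omega
      have hmodeq : c * s % (s + k) = v * s % (s + k) := by
        have h1 : (c * s) % (s + k) = (c * s + (e + B') * (s + k)) % (s + k) := by
          rw [Nat.add_mul_mod_self_right]
        rw [h1, heq2]
      have hmod2 : c ≡ v [MOD (s + k)] :=
        (Nat.ModEq.cancel_right_of_coprime (by rw [Nat.gcd_comm]; exact hsn hk hcop)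
          (hmodeq : c * s ≡ v * s [MOD (s+k)]))
      have hcv : c < v := by
        have hcs : c * s < v * s := by omega
        exact lt_of_mul_lt_mul_right hcs (Nat.zero_le s)
      have : c % (s + k) = v % (s + k) := hmod2
      rw [Nat.mod_eq_of_lt (by omega), Nat.mod_eq_of_lt (by omega)] at this
      omega
    have hIdd : DDistinct d (iot s k '' Set.Icc u v) := by rwa [hIeq] at hdd
    have hDD : DDistinct d (genIdeal s k x₀) :=
      crux hs hk hcop d hu0 huv hv hB' hBu hBu2 hIdd hx₀e
    have hle : x₀ ≤ H := hHub ⟨hx₀P, hDD⟩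
    rw [hmeq, hmHeq, hIcard, hJcard]
    rcases Nat.lt_trichotomy (v - u) (A - uH) with h | h | h
    · left; omega
    · right
      refine ⟨by omega, ?_⟩
      have hps : (v - u) * s = (A - uH) * s := by rw [h]
      omega
    · exfalso
      have h3 := Nat.mul_le_mul_right s (show A - uH + 1 ≤ v - u by omega)
      rw [Nat.add_mul, Nat.one_mul] at h3
      omega
end

section
/- Let s and k be coprime positive integers with s ≥ 2, and write s̄ = s mod k. For all i ∈ {0, …, k−1}, the cardinality of the ledge L_i is given by the first applicable case of: |L_i| = 0 if s divides i and i > 0; |L_i| = ⌊(s−1)/k⌋ if i = s̄; |L_i| = 1 if i = (⌈k/s⌉·s) mod k and k > s; |L_i| = ⌊(s−1)/k⌋ + 1 if i = 0 and k > 1; |L_i| = ⌊(s−1)/k⌋ + 1 if s̄ < i and s does not divide i; and |L_i| = ⌊(s−1)/k⌋ + 2 if 0 < i < s̄ and i ≠ (⌈k/s⌉·s) mod k. -/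
/-- The ledge `L_i = {x ∈ E : x ≡ i (mod k)}`. -/
def Ledge (s k i : ℕ) : Set ℕ := {x ∈ Eset s k | x % k = i}

lemma mem_Ledge_iff {s k i x : ℕ} (hs : 2 ≤ s) (hk : 0 < k) :
    x ∈ Ledge s k i ↔ 0 < x ∧ x < s + k ∧ ¬ s ∣ x ∧ x % k = i := by
  constructor
  · rintro ⟨⟨⟨hx0, hrep⟩, hxle⟩, hmod⟩
    refine ⟨hx0, by omega, ?_, hmod⟩
    rintro ⟨m, rfl⟩
    exact hrep ⟨m, 0, by ring⟩
  · rintro ⟨hx0, hlt, hnd, hmod⟩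
    refine ⟨⟨⟨hx0, ?_⟩, by omega⟩, hmod⟩
    rintro ⟨a, b, hab⟩
    rcases Nat.eq_zero_or_pos b with rfl | hb
    · exact hnd ⟨a, by rw [hab]; ring⟩
    · have h1 : s + k ≤ b * (s + k) := Nat.le_mul_of_pos_right (s+k) hb |>.trans_eq (Nat.mul_comm _ _)
      omega

lemma mem_class_iff {k i x : ℕ} (hk : 0 < k) (hik : i < k) :
    x % k = i ↔ ∃ j, x = i + k * j := by
  constructor
  · intro h
    exact ⟨x / k, by rw [← h, Nat.add_comm, Nat.div_add_mod]⟩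
  · rintro ⟨j, rfl⟩
    rw [Nat.add_mul_mod_self_left, Nat.mod_eq_of_lt hik]

lemma inj_aux {k : ℕ} (hk : 0 < k) (i : ℕ) : Function.Injective (fun j => i + k * j) := by
  intro a b hab
  have hab' : i + k * a = i + k * b := hab
  exact Nat.eq_of_mul_eq_mul_left hk (by omega)

lemma ncard_image (f : ℕ → ℕ) (hf : Function.Injective f) (n : ℕ) :
    (f '' Set.Iio n).ncard = n := by
  rw [← Finset.coe_range, ← Finset.coe_image, Set.ncard_coe_finset,
      Finset.card_image_of_injective _ hf, Finset.card_range]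

lemma split_sk {s k : ℕ} (hs : 2 ≤ s) (hk2 : 2 ≤ k) (hcop : Nat.Coprime s k) :
    ∃ Q r, s = k * Q + r ∧ 1 ≤ r ∧ r < k ∧ s % k = r ∧ (s - 1) / k = Q := by
  have hkpos : 0 < k := by omega
  have hr1 : s % k ≠ 0 := by
    intro h
    have h2 : k ∣ s := Nat.dvd_of_mod_eq_zero h
    have := Nat.dvd_one.mp (hcop ▸ Nat.dvd_gcd h2 dvd_rfl)
    omega
  obtain ⟨Q, hQ⟩ : ∃ Q, Q = s / k := ⟨_, rfl⟩
  obtain ⟨r, hr⟩ : ∃ r, r = s % k := ⟨_, rfl⟩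
  have h : k * Q + r = s := by rw [hQ, hr]; exact Nat.div_add_mod s k
  have hrlt : r < k := hr ▸ Nat.mod_lt s hkpos
  rw [← hr] at hr1
  refine ⟨Q, r, by omega, by omega, hrlt, hr.symm, ?_⟩
  have h2 : s - 1 = (r - 1) + k * Q := by omega
  rw [h2, Nat.add_mul_div_left _ _ hkpos, Nat.div_eq_of_lt (by omega), Nat.zero_add]

lemma not_dvd_aux {s k i : ℕ} (hs : 2 ≤ s) (hk2 : 2 ≤ k) (hcop : Nat.Coprime s k)
    (hi0 : 0 < i) (hik : i < k) (hns : ¬ s ∣ i)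
    (hne1 : i ≠ s % k) (hne2 : s < k → i ≠ ((k + s - 1) / s * s) % k)
    (j : ℕ) (hx : i + k * j < s + k) : ¬ s ∣ (i + k * j) := by
  rintro ⟨m, hm⟩
  have hkpos : 0 < k := by omega
  have hspos : 0 < s := by omega
  rcases lt_trichotomy s k with hlt | heq | hgt
  · rcases Nat.eq_zero_or_pos j with rfl | hj
    · exact hns ⟨m, by omega⟩
    · have hk_le : k ≤ s * m := by
        have h0 : k * 1 ≤ k * j := Nat.mul_le_mul_left k hj
        omega
      obtain ⟨c, hc⟩ : ∃ c, c = (k + s - 1) / s := ⟨_, rfl⟩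
      have hcs1 : k ≤ c * s := by
        have h1 := Nat.div_add_mod (k + s - 1) s
        have h2 : (k + s - 1) % s < s := Nat.mod_lt _ hspos
        have h3 : c * s = s * ((k + s - 1) / s) := by rw [hc]; exact Nat.mul_comm _ _
        omega
      have hcs2 : c * s ≤ k + s - 1 := by rw [hc]; exact Nat.div_mul_le_self _ _
      have hmge : c ≤ m := by
        rw [hc, Nat.div_le_iff_le_mul_add_pred hspos]
        omega
      have hmle : m ≤ c := by
        by_contra hcm
        push_neg at hcm
        have h3 : (c + 1) * s ≤ m * s := Nat.mul_le_mul_right s hcm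
        have h4 : (c + 1) * s = c * s + s := by ring
        have h5 : m * s = s * m := Nat.mul_comm m s
        omega
      have hmc : m = c := le_antisymm hmle hmge
      subst hmc
      have hmod : (m * s) % k = i := by
        rw [Nat.mul_comm m s, ← hm, Nat.add_mul_mod_self_left, Nat.mod_eq_of_lt hik]
      exact hne2 hlt (by rw [← hc]; exact hmod.symm)
  · subst heq
    have := hcop
    rw [Nat.Coprime, Nat.gcd_self] at this
    omega
  · have h1 : s * m < s * 2 := by
      have h2 : s * 2 = s + s := by ring
      omega
    have hm2 : m < 2 := Nat.lt_of_mul_lt_mul_left h1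
    interval_cases m
    · omega
    · apply hne1
      rw [show s = i + k * j from by omega, Nat.add_mul_mod_self_left, Nat.mod_eq_of_lt hik]

/-- The cardinality of each ledge, given by the first applicable case
(`(⌈k/s⌉ * s) mod k` is written `((k + s - 1) / s * s) % k`). -/
theorem ledge_lengths (s k : ℕ) (hs : 2 ≤ s) (hk : 0 < k) (hcop : Nat.Coprime s k)
    (i : ℕ) (hi : i < k) :
    ((s ∣ i ∧ 0 < i) → (Ledge s k i).ncard = 0) ∧
    (¬(s ∣ i ∧ 0 < i) → i = s % k →
      (Ledge s k i).ncard = (s - 1) / k) ∧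
    (¬(s ∣ i ∧ 0 < i) → i ≠ s % k → (i = ((k + s - 1) / s * s) % k ∧ s < k) →
      (Ledge s k i).ncard = 1) ∧
    (¬(s ∣ i ∧ 0 < i) → i ≠ s % k → ¬(i = ((k + s - 1) / s * s) % k ∧ s < k) →
      (i = 0 ∧ 1 < k) → (Ledge s k i).ncard = (s - 1) / k + 1) ∧
    (¬(s ∣ i ∧ 0 < i) → i ≠ s % k → ¬(i = ((k + s - 1) / s * s) % k ∧ s < k) →
      ¬(i = 0 ∧ 1 < k) → (s % k < i ∧ ¬s ∣ i) →
      (Ledge s k i).ncard = (s - 1) / k + 1) ∧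
    (¬(s ∣ i ∧ 0 < i) → i ≠ s % k → ¬(i = ((k + s - 1) / s * s) % k ∧ s < k) →
      ¬(i = 0 ∧ 1 < k) → ¬(s % k < i ∧ ¬s ∣ i) →
      (0 < i ∧ i < s % k ∧ i ≠ ((k + s - 1) / s * s) % k) →
      (Ledge s k i).ncard = (s - 1) / k + 2) := by
  refine ⟨?_, ?_, ?_, ?_, ?_, ?_⟩
  · -- Case 1: s ∣ i, 0 < i
    rintro ⟨hdvd, hi0⟩
    have hsle : s ≤ i := Nat.le_of_dvd hi0 hdvd
    have hset : Ledge s k i = ∅ := by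
      ext x
      rw [mem_Ledge_iff hs hk]
      simp only [Set.mem_empty_iff_false, iff_false]
      rintro ⟨hx0, hxlt, hnd, hmod⟩
      obtain ⟨j, rfl⟩ := (mem_class_iff hk hi).mp hmod
      rcases Nat.eq_zero_or_pos j with rfl | hj
      · exact hnd (by simpa using hdvd)
      · have h1 : k * 1 ≤ k * j := Nat.mul_le_mul_left k hj
        omega
    rw [hset, Set.ncard_empty]
  · -- Case 2: i = s % k
    rintro - h2
    rcases Nat.lt_or_ge k 2 with hk1 | hk2
    · have hk1' : k = 1 := by omega
      subst hk1'
      have hi0 : i = 0 := by omega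
      subst hi0
      have hset : Ledge s 1 0 = (fun j => 1 + j) '' Set.Iio (s - 1) := by
        ext x
        rw [mem_Ledge_iff hs hk]
        simp only [Set.mem_image, Set.mem_Iio]
        constructor
        · rintro ⟨hx0, hxlt, hnd, -⟩
          have hxs : x ≠ s := fun h => hnd (h ▸ dvd_rfl)
          exact ⟨x - 1, by omega, by omega⟩
        · rintro ⟨j, hj, rfl⟩
          refine ⟨by omega, by omega, fun hd => ?_, Nat.mod_one _⟩
          have := Nat.le_of_dvd (by omega) hd
          omega
      rw [hset, ncard_image _ (fun a b hab => by omega) _]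
      omega
    · obtain ⟨Q, r, hsum, hr1, hrk, hmod, hdiv1⟩ := split_sk hs hk2 hcop
      rw [hmod] at h2
      rw [← h2] at hsum hr1 hrk
      rw [hdiv1]
      have hset : Ledge s k i = (fun j => i + k * j) '' Set.Iio Q := by
        ext x
        rw [mem_Ledge_iff hs hk]
        simp only [Set.mem_image, Set.mem_Iio]
        constructor
        · rintro ⟨hx0, hxlt, hnd, hmodx⟩
          obtain ⟨j, rfl⟩ := (mem_class_iff hk hrk).mp hmodx
          refine ⟨j, ?_, rfl⟩
          have hjQ : j < Q + 1 := by
            refine Nat.lt_of_mul_lt_mul_left (a := k) ?_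
            have h6 : k * (Q + 1) = k * Q + k := by ring
            omega
          have hjne : j ≠ Q := by
            rintro rfl
            exact hnd ⟨1, by omega⟩
          omega
        · rintro ⟨j, hj, rfl⟩
          have hkj : k * j + k ≤ k * Q := by
            have h6 : k * (j + 1) ≤ k * Q := Nat.mul_le_mul_left k (by omega)
            have h7 : k * (j + 1) = k * j + k := by ring
            omega
          refine ⟨by omega, by omega, ?_,
            by rw [Nat.add_mul_mod_self_left, Nat.mod_eq_of_lt hrk]⟩
          intro hd
          have := Nat.le_of_dvd (by omega) hd
          omega
      rw [hset, ncard_image _ (inj_aux hk i) Q]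
  · -- Case 3: i = ⌈k/s⌉s mod k, s < k
    rintro - - ⟨hic, hsk⟩
    have hspos : 0 < s := by omega
    have hkc1 : k ≤ (k + s - 1) / s * s := by
      have h1 := Nat.div_add_mod (k + s - 1) s
      have h2 : (k + s - 1) % s < s := Nat.mod_lt _ hspos
      have h3 : (k + s - 1) / s * s = s * ((k + s - 1) / s) := Nat.mul_comm _ _
      omega
    have hkc2 : (k + s - 1) / s * s ≤ k + s - 1 := Nat.div_mul_le_self _ _
    have hne : (k + s - 1) / s * s ≠ k := by
      intro h
      have h3 : (k + s - 1) / s * s = s * ((k + s - 1) / s) := Nat.mul_comm _ _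
      have h2 : s ∣ k := ⟨(k + s - 1) / s, by omega⟩
      have := Nat.dvd_one.mp (hcop ▸ Nat.dvd_gcd dvd_rfl h2)
      omega
    have himod : i = (k + s - 1) / s * s - k := by
      rw [hic, Nat.mod_eq_sub_mod hkc1, Nat.mod_eq_of_lt (by omega)]
    have hi0 : 0 < i := by omega
    have hset : Ledge s k i = {i} := by
      ext x
      rw [mem_Ledge_iff hs hk, Set.mem_singleton_iff]
      constructor
      · rintro ⟨hx0, hxlt, hnd, hmodx⟩
        obtain ⟨j, rfl⟩ := (mem_class_iff hk hi).mp hmodx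
        rcases Nat.eq_zero_or_pos j with rfl | hj
        · omega
        rcases Nat.lt_or_ge j 2 with hj2 | hj2
        · exfalso
          apply hnd
          have hj1 : j = 1 := by omega
          subst hj1
          rw [show i + k * 1 = (k + s - 1) / s * s from by omega]
          exact dvd_mul_left s _
        · exfalso
          have h6 : k * 2 ≤ k * j := Nat.mul_le_mul_left k hj2
          omega
      · rintro rfl
        refine ⟨hi0, by omega, ?_, Nat.mod_eq_of_lt (by omega)⟩
        intro hd
        have := Nat.le_of_dvd hi0 hd
        omega
    rw [hset, Set.ncard_singleton]
  · -- Case 4: i = 0, k > 1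
    rintro - - - ⟨hi0, hk2'⟩
    subst hi0
    have hk2 : 2 ≤ k := by omega
    obtain ⟨Q, r, hsum, hr1, hrk, hmod, hdiv1⟩ := split_sk hs hk2 hcop
    rw [hdiv1]
    have hset : Ledge s k 0 = (fun j => k + k * j) '' Set.Iio (Q + 1) := by
      ext x
      rw [mem_Ledge_iff hs hk]
      simp only [Set.mem_image, Set.mem_Iio]
      constructor
      · rintro ⟨hx0, hxlt, hnd, hmodx⟩
        obtain ⟨j, rfl⟩ := (mem_class_iff hk hi).mp hmodx
        rcases Nat.eq_zero_or_pos j with rfl | hj1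
        · omega
        refine ⟨j - 1, ?_, ?_⟩
        · have hjb : j < Q + 2 := by
            refine Nat.lt_of_mul_lt_mul_left (a := k) ?_
            have h4 : k * (Q + 2) = k * Q + k + k := by ring
            omega
          omega
        · show k + k * (j - 1) = 0 + k * j
          have h6 : k * (j - 1 + 1) = k * (j - 1) + k := by ring
          rw [show j - 1 + 1 = j from by omega] at h6
          omega
      · rintro ⟨j, hj, rfl⟩
        have hub : k * j ≤ k * Q := Nat.mul_le_mul_left k (by omega)
        refine ⟨by omega, by omega, ?_,
          by rw [Nat.add_mul_mod_self_left, Nat.mod_self]⟩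
        intro hd
        have hd2 : s ∣ k * (1 + j) := by
          rw [show k * (1 + j) = k + k * j from by ring]; exact hd
        have hd3 : s ∣ 1 + j := Nat.Coprime.dvd_of_dvd_mul_left hcop hd2
        have hd4 : s ≤ 1 + j := Nat.le_of_dvd (by omega) hd3
        have h7 : k * s ≤ k * (1 + j) := Nat.mul_le_mul_left k hd4
        have h8 : k + s ≤ k * s := Nat.add_le_mul hk2 hs
        have h9 : k * (1 + j) = k + k * j := by ring
        omega
    rw [hset, ncard_image _ (inj_aux hk k) (Q + 1)]
  · -- Case 5: s % k < i, ¬ s ∣ i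
    rintro - h2 h3 - ⟨h5a, h5b⟩
    have hi0 : 0 < i := by omega
    have hk2 : 2 ≤ k := by omega
    obtain ⟨Q, r, hsum, hr1, hrk, hmod, hdiv1⟩ := split_sk hs hk2 hcop
    rw [hdiv1]
    rw [hmod] at h2 h5a
    have hne2 : s < k → i ≠ ((k + s - 1) / s * s) % k := fun hlt he => h3 ⟨he, hlt⟩
    have hset : Ledge s k i = (fun j => i + k * j) '' Set.Iio (Q + 1) := by
      ext x
      rw [mem_Ledge_iff hs hk]
      simp only [Set.mem_image, Set.mem_Iio]
      constructor
      · rintro ⟨hx0, hxlt, hnd, hmodx⟩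
        obtain ⟨j, rfl⟩ := (mem_class_iff hk hi).mp hmodx
        refine ⟨j, ?_, rfl⟩
        refine Nat.lt_of_mul_lt_mul_left (a := k) ?_
        have h6 : k * (Q + 1) = k * Q + k := by ring
        omega
      · rintro ⟨j, hj, rfl⟩
        have hub : k * j ≤ k * Q := Nat.mul_le_mul_left k (by omega)
        have hxlt : i + k * j < s + k := by omega
        exact ⟨by omega, hxlt,
          not_dvd_aux hs hk2 hcop hi0 hi h5b (by rw [hmod]; omega) hne2 j hxlt,
          by rw [Nat.add_mul_mod_self_left, Nat.mod_eq_of_lt hi]⟩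
    rw [hset, ncard_image _ (inj_aux hk i) (Q + 1)]
  · -- Case 6: 0 < i < s % k, i ≠ ⌈k/s⌉s mod k
    rintro h1 - - - - ⟨h6a, h6b, h6c⟩
    have hk2 : 2 ≤ k := by omega
    obtain ⟨Q, r, hsum, hr1, hrk, hmod, hdiv1⟩ := split_sk hs hk2 hcop
    rw [hdiv1]
    rw [hmod] at h6b
    have hns : ¬ s ∣ i := fun hd => h1 ⟨hd, h6a⟩
    have hne2 : s < k → i ≠ ((k + s - 1) / s * s) % k := fun _ => h6c
    have hset : Ledge s k i = (fun j => i + k * j) '' Set.Iio (Q + 2) := by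
      ext x
      rw [mem_Ledge_iff hs hk]
      simp only [Set.mem_image, Set.mem_Iio]
      constructor
      · rintro ⟨hx0, hxlt, hnd, hmodx⟩
        obtain ⟨j, rfl⟩ := (mem_class_iff hk hi).mp hmodx
        refine ⟨j, ?_, rfl⟩
        refine Nat.lt_of_mul_lt_mul_left (a := k) ?_
        have h6 : k * (Q + 2) = k * Q + k + k := by ring
        omega
      · rintro ⟨j, hj, rfl⟩
        have hub : k * j ≤ k * (Q + 1) := Nat.mul_le_mul_left k (by omega)
        have h7 : k * (Q + 1) = k * Q + k := by ring
        have hxlt : i + k * j < s + k := by omega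
        exact ⟨by omega, hxlt,
          not_dvd_aux hs hk2 hcop h6a hi hns (by rw [hmod]; omega) hne2 j hxlt,
          by rw [Nat.add_mul_mod_self_left, Nat.mod_eq_of_lt hi]⟩
    rw [hset, ncard_image _ (inj_aux hk i) (Q + 2)]
end

section
/- Let s, k, d be positive integers with s and k coprime, s ≥ 2, and d < k. Let I_i = (i, i+s̄, …, i+s̄(s̃−1)) be an s̃-interval that does not contain both the residues 0 and s̄. Then the number of entries of I_i lying in {1, …, s̄−1} (as residues mod k) equals ⌈s̄·s̃/k⌉ if i ∈ (s̄ − s̄·s̃, s̄)_k, and equals ⌈s̄·s̃/k⌉ − 1 if i ∈ [s̄, s̄ − s̄·s̃]_k. In particular, the maximum over all s̃-intervals not containing both 0 and s̄ of the number of entries in {1, …, s̄−1} equals ⌈(s̄·s̃ − 1)/k⌉. -/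
section helpers

private lemma myIntDiv {k : ℤ} (hk : 0 < k) (y n : ℤ) (h1 : k * n ≤ y) (h2 : y < k * (n+1)) :
    y / k = n := by
  have hle : n ≤ y / k := (Int.le_ediv_iff_mul_le hk).mpr (by linarith [mul_comm n k])
  have hlt : y / k < n + 1 := (Int.ediv_lt_iff_lt_mul hk).mpr (by linarith [mul_comm (n+1) k])
  omega

private lemma myIntMod {k : ℤ} (hk : 0 < k) (y r : ℤ) (h0 : 0 ≤ r) (hrk : r < k)
    (hd : k ∣ y - r) : y % k = r := by
  obtain ⟨c, hc⟩ := hd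
  have hy : y = r + c * k := by linarith
  rw [hy, Int.add_mul_emod_self_right, Int.emod_eq_of_lt h0 hrk]

private lemma dvdBound {k : ℤ} (hk : 0 < k) (y : ℤ) (h : k ∣ y) (h1 : -k < y) (h2 : y < 2*k) :
    y = 0 ∨ y = k := by
  obtain ⟨c, rfl⟩ := h
  have h3 : 0 ≤ c := by
    by_contra hc; push_neg at hc
    have : k * c ≤ k * (-1) := mul_le_mul_of_nonneg_left (by omega) hk.le
    linarith
  have h4 : c ≤ 1 := by
    by_contra hc; push_neg at hc
    have : k * 2 ≤ k * c := mul_le_mul_of_nonneg_left (by omega) hk.le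
    linarith
  rcases (by omega : c = 0 ∨ c = 1) with rfl | rfl
  · left; ring
  · right; ring

private lemma stepDiv {k m : ℤ} (hk : 0 < k) (hm : 0 < m) (hmk : m ≤ k) (x : ℤ) :
    x / k - (x - m) / k = if x % k < m then 1 else 0 := by
  have hmod := Int.mul_ediv_add_emod x k
  have h4 := Int.emod_nonneg x (by omega : k ≠ 0)
  have h5 := Int.emod_lt_of_pos x hk
  have hxm : (x - m) / k = (x % k - m) / k + x / k := by
    rw [show x - m = (x % k - m) + k * (x / k) by linarith,
      Int.add_mul_ediv_left _ _ (by omega : k ≠ 0)]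
  by_cases h : x % k < m
  · have h6 : (x % k - m) / k = -1 := myIntDiv hk (x % k - m) (-1) (by linarith) (by linarith)
    rw [if_pos h, hxm, h6]; ring
  · have h6 : (x % k - m) / k = 0 := myIntDiv hk (x % k - m) 0 (by linarith) (by linarith)
    rw [if_neg h, hxm, h6]; ring

private lemma natDivEq {k : ℕ} (hk : 0 < k) (q r a : ℕ) (h : a = k*q + r) (hr : r < k) :
    a / k = q := by
  subst h; rw [Nat.mul_add_div hk, Nat.div_eq_of_lt hr]; omega

private lemma countLemma (k m : ℕ) (hk : 0 < k) (hm : 0 < m) (hmk : m ≤ k) (i : ℤ) (N : ℕ) :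
    ((((Finset.range N).filter (fun j : ℕ => (i + (m:ℤ) * (j:ℤ)) % (k:ℤ) < (m:ℤ))).card : ℤ))
      = (i + m * N - m) / k - (i - m) / k := by
  induction N with
  | zero => simp
  | succ n ih =>
    rw [Finset.range_add_one, Finset.filter_insert]
    have hstep := stepDiv (k := (k:ℤ)) (m := (m:ℤ)) (by exact_mod_cast hk)
      (by exact_mod_cast hm) (by exact_mod_cast hmk) (i + m * n)
    have e1 : (i + (m:ℤ) * ((n:ℤ)+1) - m) = i + m * n := by ring
    by_cases h : (i + (m:ℤ) * (n:ℤ)) % (k:ℤ) < (m:ℤ)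
    · rw [if_pos h, Finset.card_insert_of_notMem (by simp)]
      rw [if_pos h] at hstep
      push_cast
      rw [e1]
      push_cast at ih
      omega
    · rw [if_neg h]
      rw [if_neg h] at hstep
      push_cast
      rw [e1]
      push_cast at ih
      omega

end helpers

/-- `s̃ = min { (ℓ ⬝ s̄⁻¹) mod k : ℓ ∈ ℤ, -d ≤ ℓ ≤ d, ℓ ≠ 0 }`, where `s̄ = s mod k`:
the residue `r ∈ [0, k)` satisfies `r = ℓ ⬝ s̄⁻¹ mod k` iff `r * s̄ ≡ ℓ (mod k)`. -/
noncomputable def stilde (s k d : ℕ) : ℕ :=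
  sInf {r : ℕ | r < k ∧ ∃ ℓ : ℤ, ℓ ≠ 0 ∧ -(d : ℤ) ≤ ℓ ∧ ℓ ≤ (d : ℤ) ∧
    (r : ℤ) * ((s : ℤ) % (k : ℤ)) ≡ ℓ [ZMOD (k : ℤ)]}

/-- Membership of a reduced residue `x ∈ [0, k)` in the open cyclic interval
`(a, b)_k`, which is `(a mod k, b mod k)` if `a mod k ≤ b mod k`, and
`(a mod k, k-1] ∪ [0, b mod k)` otherwise. -/
def cycMemOO (k : ℕ) (a b x : ℤ) : Prop :=
  if a % (k : ℤ) ≤ b % (k : ℤ) then a % (k : ℤ) < x ∧ x < b % (k : ℤ)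
  else a % (k : ℤ) < x ∨ x < b % (k : ℤ)

/-- Membership of a reduced residue `x ∈ [0, k)` in the closed cyclic interval
`[a, b]_k`. -/
def cycMemCC (k : ℕ) (a b x : ℤ) : Prop :=
  if a % (k : ℤ) ≤ b % (k : ℤ) then a % (k : ℤ) ≤ x ∧ x ≤ b % (k : ℤ)
  else a % (k : ℤ) ≤ x ∨ x ≤ b % (k : ℤ)

/-- Membership of a reduced residue `x ∈ [0, k)` in the half-open cyclic interval
`[a, b)_k`. -/
def cycMemCO (k : ℕ) (a b x : ℤ) : Prop :=
  if a % (k : ℤ) ≤ b % (k : ℤ) then a % (k : ℤ) ≤ x ∧ x < b % (k : ℤ)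
  else a % (k : ℤ) ≤ x ∨ x < b % (k : ℤ)

/-- The number of entries of the `s̃`-interval `I_i = (i, i+s̄, …, i+s̄(s̃-1))` of
residues mod `k` that lie in `{1, …, s̄ - 1}` (entries are pairwise distinct, so
counting indices `j` is the same as counting entries). -/
noncomputable def entryCount (s k d i : ℕ) : ℕ :=
  ((Finset.range (stilde s k d)).filter
    (fun j => 1 ≤ (i + s % k * j) % k ∧ (i + s % k * j) % k ≤ s % k - 1)).card

/-- The `s̃`-interval `I_i` contains both residues `0` and `s̄`. -/
def containsBoth (s k d i : ℕ) : Prop :=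
  (∃ j < stilde s k d, (i + s % k * j) % k = 0) ∧
  (∃ j < stilde s k d, (i + s % k * j) % k = s % k)

theorem esye_interval (s k d : ℕ) (hs : 2 ≤ s) (hk : 0 < k) (hd : 0 < d)
    (hcop : Nat.Coprime s k) (hdk : d < k) :
    (∀ i : ℕ, i < k → ¬containsBoth s k d i →
      (cycMemOO k ((s % k : ℤ) - (s % k : ℤ) * (stilde s k d : ℤ)) (s % k : ℤ) (i : ℤ) →
        entryCount s k d i = (s % k * stilde s k d + k - 1) / k) ∧
      (cycMemCC k (s % k : ℤ) ((s % k : ℤ) - (s % k : ℤ) * (stilde s k d : ℤ)) (i : ℤ) →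
        entryCount s k d i = (s % k * stilde s k d + k - 1) / k - 1)) ∧
    IsGreatest {n : ℕ | ∃ i : ℕ, i < k ∧ ¬containsBoth s k d i ∧ n = entryCount s k d i}
      ((s % k * stilde s k d - 1 + (k - 1)) / k) := by
  classical
  have hk2 : 2 ≤ k := by omega
  have hknz : (k:ℤ) ≠ 0 := by exact_mod_cast hk.ne'
  have hkz : (0:ℤ) < (k:ℤ) := by exact_mod_cast hk
  set m := s % k with hm_def
  set t := stilde s k d with ht_def
  have hmk : m < k := Nat.mod_lt _ hk
  have hm0 : 0 < m := by
    rcases Nat.eq_zero_or_pos m with h | h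
    · exfalso
      have hdvd : k ∣ s := Nat.dvd_of_mod_eq_zero (by omega)
      have : k ∣ 1 := hcop ▸ Nat.dvd_gcd hdvd dvd_rfl
      have := Nat.le_of_dvd one_pos this
      omega
    · exact h
  have hcm : Nat.Coprime m k := by
    have : Nat.gcd (s % k) k = Nat.gcd k s := (Nat.gcd_rec k s).symm
    simpa [Nat.Coprime, hm_def, this, Nat.gcd_comm] using hcop
  have hMcast : ((s:ℤ) % (k:ℤ)) = (m:ℤ) := by rw [hm_def]; push_cast; ring
  set Sdef : Set ℕ := {r : ℕ | r < k ∧ ∃ ℓ : ℤ, ℓ ≠ 0 ∧ -(d : ℤ) ≤ ℓ ∧ ℓ ≤ (d : ℤ) ∧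
    (r : ℤ) * ((s : ℤ) % (k : ℤ)) ≡ ℓ [ZMOD (k : ℤ)]} with hS_def
  have hstilde : t = sInf Sdef := ht_def
  have hSne : Sdef.Nonempty := by
    obtain ⟨u, v, huv⟩ := Nat.isCoprime_iff_coprime.mpr hcm
    refine ⟨(u % (k:ℤ)).toNat, ?_, 1, one_ne_zero, by omega, by exact_mod_cast hd, ?_⟩
    · have h1 := Int.emod_lt_of_pos u hkz
      have h2 := Int.emod_nonneg u hknz
      omega
    · have h2 := Int.emod_nonneg u hknz
      have hr : (((u % (k:ℤ)).toNat : ℤ)) = u % k := Int.toNat_of_nonneg h2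
      rw [hMcast]
      refine (Int.modEq_iff_dvd).mpr ⟨v + u / k * m, ?_⟩
      rw [hr, Int.emod_def]
      linear_combination -huv
  have ht_mem : t ∈ Sdef := hstilde ▸ Nat.sInf_mem hSne
  have ht_min : ∀ r, r < t → r ∉ Sdef := by
    intro r hr hmem
    have := Nat.sInf_le hmem
    omega
  have htk : t < k := ht_mem.1
  have ht0 : 0 < t := by
    rcases Nat.eq_zero_or_pos t with h | h
    · exfalso
      obtain ⟨-, ℓ, hl0, hld1, hld2, hmod⟩ := ht_mem
      have hdvd : (k:ℤ) ∣ ℓ := by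
        have := (Int.modEq_iff_dvd).mp hmod
        rw [h] at this
        simpa using this
      rcases dvdBound hkz _ hdvd (by omega) (by omega) with h' | h' <;> omega
    · exact h
  set Qn := m * t / k with hQn_def
  set Rn := m * t % k with hRn_def
  have hQR : m * t = k * Qn + Rn := (Nat.div_add_mod (m*t) k).symm
  have hRk : Rn < k := Nat.mod_lt _ hk
  have hR1 : 1 ≤ Rn := by
    by_contra h
    push_neg at h
    have hdvd : k ∣ m * t := Nat.dvd_of_mod_eq_zero (by omega)
    have h2 : k ∣ t := Nat.Coprime.dvd_of_dvd_mul_left hcm.symm hdvd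
    have := Nat.le_of_dvd ht0 h2
    omega
  have hQRz : (m:ℤ) * t = (k:ℤ) * Qn + Rn := by exact_mod_cast hQR
  have hb : ((s:ℤ) % (k:ℤ)) % (k:ℤ) = (m:ℤ) := by
    rw [hMcast]; exact Int.emod_eq_of_lt (by omega) (by omega)
  obtain ⟨A, hAeq, hAcases⟩ : ∃ A : ℤ,
      ((s:ℤ) % (k:ℤ) - (s:ℤ) % (k:ℤ) * (t:ℤ)) % (k:ℤ) = A ∧
      (((Rn:ℤ) < m ∧ A = (m:ℤ) - Rn) ∨ ((Rn:ℤ) = m ∧ A = 0) ∨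
        ((m:ℤ) < Rn ∧ A = (m:ℤ) - Rn + k)) := by
    have hexpr : (s:ℤ) % (k:ℤ) - (s:ℤ) % (k:ℤ) * (t:ℤ) = (m:ℤ) - (m:ℤ) * t := by rw [hMcast]
    rcases lt_trichotomy Rn m with h | h | h
    · refine ⟨(m:ℤ) - Rn, ?_, Or.inl ⟨by exact_mod_cast h, rfl⟩⟩
      rw [hexpr]
      exact myIntMod hkz _ _ (by omega) (by omega) ⟨-(Qn:ℤ), by linear_combination -hQRz⟩
    · refine ⟨0, ?_, Or.inr (Or.inl ⟨by exact_mod_cast h, rfl⟩)⟩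
      rw [hexpr]
      have hz : (Rn:ℤ) = (m:ℤ) := by exact_mod_cast h
      exact myIntMod hkz _ _ le_rfl hkz ⟨-(Qn:ℤ), by linear_combination -hQRz - hz⟩
    · refine ⟨(m:ℤ) - Rn + k, ?_, Or.inr (Or.inr ⟨by exact_mod_cast h, rfl⟩)⟩
      rw [hexpr]
      exact myIntMod hkz _ _ (by omega) (by omega) ⟨-(Qn:ℤ) - 1, by linear_combination -hQRz⟩
  -- the key dichotomy
  have key : ∀ i : ℕ, i < k → ¬containsBoth s k d i →
      (cycMemOO k ((s % k : ℤ) - (s % k : ℤ) * (t : ℤ)) (s % k : ℤ) (i : ℤ) →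
        entryCount s k d i = Qn + 1) ∧
      (cycMemCC k (s % k : ℤ) ((s % k : ℤ) - (s % k : ℤ) * (t : ℤ)) (i : ℤ) →
        entryCount s k d i = Qn) := by
    intro i hik hnb
    have hcount := countLemma k m hk hm0 hmk.le (i:ℤ) t
    have hnn : ∀ j : ℕ, 0 ≤ ((i:ℤ) + (m:ℤ) * (j:ℤ)) % (k:ℤ) := fun j => Int.emod_nonneg _ hknz
    have hEC1 : entryCount s k d i
        = ((Finset.range t).filter (fun j : ℕ =>
            0 < ((i:ℤ) + (m:ℤ) * (j:ℤ)) % (k:ℤ) ∧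
            ((i:ℤ) + (m:ℤ) * (j:ℤ)) % (k:ℤ) < (m:ℤ))).card := by
      unfold entryCount
      rw [← ht_def, ← hm_def]
      congr 1
      apply Finset.filter_congr
      intro j _
      have hc : (((i + m * j) % k : ℕ) : ℤ) = ((i:ℤ) + (m:ℤ) * (j:ℤ)) % (k:ℤ) := by
        push_cast; ring
      have := hnn j
      omega
    have hpart := Finset.card_filter_add_card_filter_not
      (s := (Finset.range t).filter (fun j : ℕ => ((i:ℤ) + (m:ℤ) * (j:ℤ)) % (k:ℤ) < (m:ℤ)))
      (p := fun j : ℕ => ((i:ℤ) + (m:ℤ) * (j:ℤ)) % (k:ℤ) = 0)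
    rw [Finset.filter_filter, Finset.filter_filter] at hpart
    have e1 : (Finset.range t).filter (fun j : ℕ =>
          ((i:ℤ) + (m:ℤ)*(j:ℤ)) % (k:ℤ) < (m:ℤ) ∧ ((i:ℤ) + (m:ℤ)*(j:ℤ)) % (k:ℤ) = 0)
        = (Finset.range t).filter (fun j : ℕ => ((i:ℤ) + (m:ℤ)*(j:ℤ)) % (k:ℤ) = 0) := by
      apply Finset.filter_congr
      intro j _
      have := hnn j
      constructor
      · exact fun h => h.2
      · intro h; refine ⟨by omega, h⟩
    have e2 : (Finset.range t).filter (fun j : ℕ =>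
          ((i:ℤ)+(m:ℤ)*(j:ℤ)) % (k:ℤ) < (m:ℤ) ∧ ¬ ((i:ℤ)+(m:ℤ)*(j:ℤ)) % (k:ℤ) = 0)
        = (Finset.range t).filter (fun j : ℕ =>
          0 < ((i:ℤ)+(m:ℤ)*(j:ℤ)) % (k:ℤ) ∧ ((i:ℤ)+(m:ℤ)*(j:ℤ)) % (k:ℤ) < (m:ℤ)) := by
      apply Finset.filter_congr
      intro j _
      have := hnn j
      constructor
      · rintro ⟨ha, hb'⟩; exact ⟨by omega, ha⟩
      · rintro ⟨ha, hb'⟩; exact ⟨hb', by omega⟩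
    rw [e1, e2] at hpart
    have hZsub : (Finset.range t).filter
        (fun j : ℕ => ((i:ℤ)+(m:ℤ)*(j:ℤ)) % (k:ℤ) = 0) ⊆ {t-1} := by
      intro j hj
      rw [Finset.mem_filter, Finset.mem_range] at hj
      obtain ⟨hjt, hj0⟩ := hj
      rw [Finset.mem_singleton]
      by_contra hne
      have hj1 : j + 1 < t := by omega
      have hjn : (i + m * j) % k = 0 := by
        have hc : (((i + m * j) % k : ℕ) : ℤ) = ((i:ℤ) + (m:ℤ) * (j:ℤ)) % (k:ℤ) := by
          push_cast; ring
        omega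
      refine hnb ⟨⟨j, by omega, ?_⟩, ⟨j+1, by omega, ?_⟩⟩
      · rw [← hm_def]; exact hjn
      · rw [← hm_def]
        have h1 : i + m * (j+1) = (i + m * j) + m := by ring
        rw [h1, Nat.add_mod, hjn]
        simp [Nat.mod_eq_of_lt hmk]
    have hmemTiff : ((t-1) ∈ (Finset.range t).filter
          (fun j : ℕ => ((i:ℤ)+(m:ℤ)*(j:ℤ)) % (k:ℤ) = 0))
        ↔ ((i:ℤ) + Rn - m = 0 ∨ (i:ℤ) + Rn - m = k) := by
      rw [Finset.mem_filter, Finset.mem_range]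
      have hc1 : ((t-1:ℕ):ℤ) = (t:ℤ) - 1 := by omega
      have hc2 : (i:ℤ) + (m:ℤ) * ((t:ℤ) - 1) = ((i:ℤ) + Rn - m) + (Qn:ℤ)*(k:ℤ) := by
        linear_combination hQRz
      constructor
      · rintro ⟨-, h⟩
        rw [hc1, hc2, Int.add_mul_emod_self_right] at h
        exact dvdBound hkz _ (Int.dvd_of_emod_eq_zero h) (by omega) (by omega)
      · intro h
        refine ⟨by omega, ?_⟩
        rw [hc1, hc2, Int.add_mul_emod_self_right]
        rcases h with h | h
        · rw [h]; simp
        · rw [h]; simp [Int.emod_self]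
    obtain ⟨Z, hZeq, hZcases⟩ : ∃ Z : ℕ,
        ((Finset.range t).filter (fun j : ℕ => ((i:ℤ)+(m:ℤ)*(j:ℤ)) % (k:ℤ) = 0)).card = Z ∧
        ((Z = 1 ∧ ((i:ℤ) + Rn - m = 0 ∨ (i:ℤ) + Rn - m = k)) ∨
         (Z = 0 ∧ ¬((i:ℤ) + Rn - m = 0 ∨ (i:ℤ) + Rn - m = k))) := by
      rcases Finset.subset_singleton_iff.mp hZsub with h | h
      · refine ⟨0, by rw [h]; simp, Or.inr ⟨rfl, ?_⟩⟩
        intro hx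
        have := hmemTiff.mpr hx
        rw [h] at this
        simp at this
      · refine ⟨1, by rw [h]; simp, Or.inl ⟨rfl, ?_⟩⟩
        apply hmemTiff.mp
        rw [h]
        exact Finset.mem_singleton_self _
    obtain ⟨E, hEeq, hEcases⟩ : ∃ E : ℤ,
        ((i:ℤ) + (m:ℤ)*(t:ℤ) - (m:ℤ)) / (k:ℤ) = E + (Qn:ℤ) ∧
        (((i:ℤ) + Rn - m < 0 ∧ E = -1) ∨
         (0 ≤ (i:ℤ) + Rn - m ∧ (i:ℤ) + Rn - m < k ∧ E = 0) ∨
         ((k:ℤ) ≤ (i:ℤ) + Rn - m ∧ E = 1)) := by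
      have hxeq : (i:ℤ) + (m:ℤ)*(t:ℤ) - m = ((i:ℤ) + Rn - m) + (Qn:ℤ)*(k:ℤ) := by
        linear_combination hQRz
      have hdiv : ((i:ℤ) + (m:ℤ)*(t:ℤ) - m) / k = ((i:ℤ) + Rn - m)/(k:ℤ) + Qn := by
        rw [hxeq, Int.add_mul_ediv_right _ _ hknz]
      rcases lt_trichotomy ((i:ℤ) + Rn - m) 0 with h | h | h
      · refine ⟨-1, ?_, Or.inl ⟨h, rfl⟩⟩
        rw [hdiv, myIntDiv hkz _ (-1) (by omega) (by omega)]
      · refine ⟨0, ?_, Or.inr (Or.inl ⟨by omega, by omega, rfl⟩)⟩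
        rw [hdiv, myIntDiv hkz _ 0 (by omega) (by omega)]
      · rcases lt_or_ge ((i:ℤ) + Rn - m) (k:ℤ) with h2 | h2
        · refine ⟨0, ?_, Or.inr (Or.inl ⟨by omega, h2, rfl⟩)⟩
          rw [hdiv, myIntDiv hkz _ 0 (by omega) (by omega)]
        · refine ⟨1, ?_, Or.inr (Or.inr ⟨h2, rfl⟩)⟩
          rw [hdiv, myIntDiv hkz _ 1 (by omega) (by omega)]
    obtain ⟨W, hWeq, hWcases⟩ : ∃ W : ℤ, ((i:ℤ) - (m:ℤ)) / (k:ℤ) = W ∧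
        (((i:ℤ) < m ∧ W = -1) ∨ ((m:ℤ) ≤ i ∧ W = 0)) := by
      rcases lt_or_ge ((i:ℤ)) ((m:ℤ)) with h | h
      · exact ⟨-1, myIntDiv hkz _ (-1) (by omega) (by omega), Or.inl ⟨h, rfl⟩⟩
      · exact ⟨0, myIntDiv hkz _ 0 (by omega) (by omega), Or.inr ⟨h, rfl⟩⟩
    rw [hEeq, hWeq] at hcount
    have hfinal : (entryCount s k d i : ℤ) + Z = E + (Qn:ℤ) - W := by
      rw [hEC1]
      omega
    constructor
    · intro hmem
      simp only [cycMemOO] at hmem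
      rw [hAeq, hb] at hmem
      split_ifs at hmem <;> omega
    · intro hmem
      simp only [cycMemCC] at hmem
      rw [hAeq, hb] at hmem
      split_ifs at hmem <;> omega
  have hceil : (m * t + k - 1) / k = Qn + 1 := by
    refine natDivEq hk (Qn+1) (Rn-1) _ ?_ (by omega)
    rw [Nat.mul_add, Nat.mul_one]; omega
  have htargetQ : (m * t - 1 + (k - 1)) / k = if 2 ≤ Rn then Qn + 1 else Qn := by
    split_ifs with h
    · refine natDivEq hk (Qn+1) (Rn-2) _ ?_ (by omega)
      rw [Nat.mul_add, Nat.mul_one]; omega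
    · exact natDivEq hk Qn (k-1) _ (by omega) (by omega)
  refine ⟨?_, ?_, ?_⟩
  · -- part 1
    intro i hik hnb
    obtain ⟨h1, h2⟩ := key i hik hnb
    constructor
    · intro hmem; rw [hceil]; exact h1 hmem
    · intro hmem; rw [hceil]; have := h2 hmem; omega
  · -- part 2: membership
    by_cases hR2 : 2 ≤ Rn
    · set i0 := (m + k + 1 - Rn) % k with hi0_def
      have hi0k : i0 < k := Nat.mod_lt _ hk
      have hi0 : (Rn ≤ m + 1 ∧ i0 = m + 1 - Rn) ∨ (m + 1 < Rn ∧ i0 = m + k + 1 - Rn) := by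
        rcases le_or_gt Rn (m+1) with h | h
        · left
          refine ⟨h, ?_⟩
          rw [hi0_def, Nat.mod_eq_sub_mod (by omega)]
          have hv : m + k + 1 - Rn - k = m + 1 - Rn := by omega
          rw [hv, Nat.mod_eq_of_lt (by omega)]
        · right
          exact ⟨h, by rw [hi0_def, Nat.mod_eq_of_lt (by omega)]⟩
      have hnb0 : ¬ containsBoth s k d i0 := by
        rintro ⟨-, j2, hj2t, hj2⟩
        rw [← ht_def] at hj2t
        rw [← hm_def] at hj2
        have e1 : i0 + m * j2 = k * ((i0 + m * j2)/k) + m := by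
          conv_lhs => rw [← Nat.div_add_mod (i0 + m * j2) k]
          rw [hj2]
        have e1z : (i0:ℤ) + m * j2 = (k:ℤ) * (((i0 + m*j2)/k : ℕ):ℤ) + m := by
          exact_mod_cast e1
        obtain ⟨c, hc⟩ : ∃ c : ℤ, (i0:ℤ) = (m:ℤ) + 1 - Rn + (k:ℤ) * c := by
          rcases hi0 with ⟨h', hv⟩ | ⟨h', hv⟩
          · exact ⟨0, by omega⟩
          · exact ⟨1, by omega⟩
        set q2 : ℤ := (((i0 + m*j2)/k : ℕ):ℤ) with hq2_def
        have e3 : 1 - (m:ℤ) * ((t:ℤ) - (j2:ℤ)) = (k:ℤ) * (q2 - c - Qn) := by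
          linear_combination e1z - hc - hQRz
        rcases Nat.eq_zero_or_pos j2 with hj20 | hj21
        · have hj2z : (j2:ℤ) = 0 := by exact_mod_cast hj20
          have hdvd : (k:ℤ) ∣ ((Rn:ℤ) - 1) :=
            ⟨c - q2, by linear_combination -e3 - hQRz + (m:ℤ) * hj2z⟩
          rcases dvdBound hkz _ hdvd (by omega) (by omega) with h' | h' <;> omega
        · refine ht_min (t - j2) (by omega) ?_
          rw [hS_def]
          refine ⟨by omega, 1, one_ne_zero, by omega, by exact_mod_cast hd, ?_⟩
          rw [hMcast]
          refine (Int.modEq_iff_dvd).mpr ⟨q2 - c - Qn, ?_⟩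
          have hu : ((t - j2 : ℕ):ℤ) = (t:ℤ) - (j2:ℤ) := by omega
          rw [hu]
          linear_combination e3
      have hopen : cycMemOO k ((s % k : ℤ) - (s % k : ℤ) * (t : ℤ)) (s % k : ℤ) (i0 : ℤ) := by
        simp only [cycMemOO]
        rw [hAeq, hb]
        split_ifs <;> omega
      refine ⟨i0, hi0k, hnb0, ?_⟩
      rw [htargetQ, if_pos hR2]
      exact ((key i0 hi0k hnb0).1 hopen).symm
    · have hRn1 : Rn = 1 := by omega
      have hibk : m - 1 < k := by omega
      have hnbib : ¬ containsBoth s k d (m-1) := by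
        rintro ⟨-, j, hjt, hj⟩
        rw [← ht_def] at hjt
        rw [← hm_def] at hj
        have e1 : (m - 1) + m * j = k * (((m-1) + m * j)/k) + m := by
          conv_lhs => rw [← Nat.div_add_mod ((m-1) + m * j) k]
          rw [hj]
        have e1z : ((m:ℤ) - 1) + m * j = (k:ℤ) * ((((m-1) + m*j)/k : ℕ):ℤ) + m := by
          have hcast : (((m-1) : ℕ):ℤ) = (m:ℤ) - 1 := by omega
          exact_mod_cast hcast ▸ (by exact_mod_cast e1 :
            (((m-1) : ℕ):ℤ) + (m:ℤ) * j = (k:ℤ) * ((((m-1) + m*j)/k : ℕ):ℤ) + m)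
        set q : ℤ := ((((m-1) + m*j)/k : ℕ):ℤ) with hq_def
        rcases Nat.eq_zero_or_pos j with hj0 | hj1
        · have hj0z : (j:ℤ) = 0 := by exact_mod_cast hj0
          have hdvd : (k:ℤ) ∣ (-1) := ⟨q, by linear_combination e1z - (m:ℤ)*hj0z⟩
          rcases dvdBound hkz _ hdvd (by omega) (by omega) with h' | h' <;> omega
        · refine ht_min j (by omega) ?_
          rw [hS_def]
          refine ⟨by omega, 1, one_ne_zero, by omega, by exact_mod_cast hd, ?_⟩
          rw [hMcast]
          refine (Int.modEq_iff_dvd).mpr ⟨-q, ?_⟩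
          linear_combination -e1z
      have hclosed : cycMemCC k (s % k : ℤ)
          ((s % k : ℤ) - (s % k : ℤ) * (t : ℤ)) ((m-1 : ℕ) : ℤ) := by
        simp only [cycMemCC]
        rw [hAeq, hb]
        split_ifs <;> omega
      refine ⟨m-1, hibk, hnbib, ?_⟩
      rw [htargetQ, if_neg hR2]
      exact ((key (m-1) hibk hnbib).2 hclosed).symm
  · -- part 2: upper bound
    rintro n ⟨i, hik, hnb, rfl⟩
    obtain ⟨h1, h2⟩ := key i hik hnb
    rw [htargetQ]
    by_cases hmem : cycMemOO k ((s % k : ℤ) - (s % k : ℤ) * (t : ℤ)) (s % k : ℤ) (i : ℤ)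
    · have hv := h1 hmem
      have hR2 : 2 ≤ Rn := by
        by_contra h'
        simp only [cycMemOO] at hmem
        rw [hAeq, hb] at hmem
        split_ifs at hmem <;> omega
      rw [if_pos hR2]
      omega
    · have hcc : cycMemCC k (s % k : ℤ) ((s % k : ℤ) - (s % k : ℤ) * (t : ℤ)) (i : ℤ) := by
        simp only [cycMemOO] at hmem
        simp only [cycMemCC]
        rw [hAeq, hb] at hmem ⊢
        split_ifs at hmem ⊢ <;> omega
      have hv := h2 hcc
      split_ifs <;> omega
end

section
/- Let s, k, d be positive integers with s and k coprime, s ≥ 2, and d < k. For every i ∈ ℤ/kℤ, the number of entries of the s̃-interval I_i = (i, i+s̄, …, i+s̄(s̃−1)) lying in {0, 1, …, s̄−1} (as residues mod k) equals ⌈s̄·s̃/k⌉ if i ∈ [s̄ − s̄·s̃, s̄)_k, and equals ⌈s̄·s̃/k⌉ − 1 if i ∈ [s̄, s̄ − s̄·s̃)_k. -/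
/-- The number of entries of the `s̃`-interval `I_i = (i, i+s̄, …, i+s̄(s̃-1))` of
residues mod `k` that lie in `{0, 1, …, s̄ - 1}` (entries are pairwise distinct, so
counting indices `j` is the same as counting entries). -/
noncomputable def entryCount0 (s k d i : ℕ) : ℕ :=
  ((Finset.range (stilde s k d)).filter
    (fun j => (i + s % k * j) % k < s % k)).card


lemma ediv_neg_one' (k x : ℤ) (hk : 0 < k) (h1 : -k ≤ x) (h2 : x < 0) : x / k = -1 := by
  have e : x = (x + k) + (-1) * k := by ring
  rw [e, Int.add_mul_ediv_right _ _ hk.ne',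
    Int.ediv_eq_zero_of_lt (by omega) (by omega)]
  norm_num

lemma ediv_one'' (k x : ℤ) (hk : 0 < k) (h1 : k ≤ x) (h2 : x < 2*k) : x / k = 1 := by
  have e : x = (x - k) + 1 * k := by ring
  rw [e, Int.add_mul_ediv_right _ _ hk.ne',
    Int.ediv_eq_zero_of_lt (by omega) (by omega)]
  norm_num

lemma step_eq' (S k x : ℕ) (hS : 0 < S) (hSk : S < k) :
    (x:ℤ)/k - ((x:ℤ) - S)/k = if x % k < S then 1 else 0 := by
  have hk : (0:ℤ) < k := by exact_mod_cast hS.trans hSk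
  have hx : (x:ℤ) = (x:ℤ) % k + ((x:ℤ)/k) * k := by
    rw [mul_comm]; exact (Int.emod_add_mul_ediv _ _).symm
  have hr0 : (0:ℤ) ≤ (x:ℤ) % k := Int.emod_nonneg _ hk.ne'
  have hrk : (x:ℤ) % k < k := Int.emod_lt_of_pos _ hk
  have e2 : ((x:ℤ) - S) = ((x:ℤ) % k - S) + ((x:ℤ)/k) * k := by linear_combination hx
  have hcond : (x % k < S) ↔ ((x:ℤ) % k < (S:ℤ)) := by
    rw [← Int.natCast_mod]; exact_mod_cast Iff.rfl
  have hSk' : (S:ℤ) < k := by exact_mod_cast hSk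
  rw [e2, Int.add_mul_ediv_right _ _ hk.ne']
  by_cases h : x % k < S
  · have hc : (x:ℤ) % k < (S:ℤ) := hcond.mp h
    rw [if_pos h, ediv_neg_one' k ((x:ℤ) % k - S) hk (by omega) (by omega)]; ring
  · have hc : ¬ ((x:ℤ) % k < (S:ℤ)) := fun hh => h (hcond.mpr hh)
    rw [if_neg h, Int.ediv_eq_zero_of_lt (by omega : (0:ℤ) ≤ (x:ℤ) % k - S) (by omega)]; ring

lemma count_aux' (S k : ℕ) (hS : 0 < S) (hSk : S < k) (i : ℕ) (n : ℕ) :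
    (((Finset.range n).filter (fun j => (i + S * j) % k < S)).card : ℤ)
      = ((i : ℤ) + S * n - S) / k - ((i : ℤ) - S) / k := by
  induction n with
  | zero => simp
  | succ n ih =>
    rw [Finset.range_add_one, Finset.filter_insert]
    have hstep := step_eq' S k (i + S * n) hS hSk
    by_cases h : (i + S * n) % k < S
    · rw [if_pos h, Finset.card_insert_of_notMem (by simp)]
      rw [if_pos h] at hstep
      push_cast
      push_cast at ih hstep
      rw [show (i:ℤ) + (S:ℤ)*((n:ℤ)+1) - S = (i:ℤ) + S*n from by ring]
      linarith [ih, hstep]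
    · rw [if_neg h]
      rw [if_neg h] at hstep
      push_cast
      push_cast at ih hstep
      rw [show (i:ℤ) + (S:ℤ)*((n:ℤ)+1) - S = (i:ℤ) + S*n from by ring]
      linarith [ih, hstep]

theorem esye_interval_all (s k d : ℕ) (hs : 2 ≤ s) (hk : 0 < k) (hd : 0 < d)
    (hcop : Nat.Coprime s k) (hdk : d < k) :
    ∀ i : ℕ, i < k →
      (cycMemCO k ((s % k : ℤ) - (s % k : ℤ) * (stilde s k d : ℤ)) (s % k : ℤ) (i : ℤ) →
        entryCount0 s k d i = (s % k * stilde s k d + k - 1) / k) ∧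
      (cycMemCO k (s % k : ℤ) ((s % k : ℤ) - (s % k : ℤ) * (stilde s k d : ℤ)) (i : ℤ) →
        entryCount0 s k d i = (s % k * stilde s k d + k - 1) / k - 1) := by
  have hk2 : 2 ≤ k := by omega
  haveI : NeZero k := ⟨by omega⟩
  set S := s % k with hSdef
  set T := stilde s k d with hTdef
  have hS0 : 0 < S := by
    rcases Nat.eq_zero_or_pos S with h0 | h; swap; · exact h
    exfalso
    have hdvd : k ∣ s := Nat.dvd_of_mod_eq_zero h0
    have hgk : k ∣ Nat.gcd s k := Nat.dvd_gcd hdvd dvd_rfl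
    have hc' : Nat.gcd s k = 1 := hcop
    rw [hc'] at hgk
    have hk1 : k = 1 := Nat.dvd_one.mp hgk
    omega
  have hSk : S < k := Nat.mod_lt _ (by omega)
  have hne : {r : ℕ | r < k ∧ ∃ ℓ : ℤ, ℓ ≠ 0 ∧ -(d : ℤ) ≤ ℓ ∧ ℓ ≤ (d : ℤ) ∧
      (r : ℤ) * ((s : ℤ) % (k : ℤ)) ≡ ℓ [ZMOD (k : ℤ)]}.Nonempty := by
    refine ⟨(((ZMod.unitOfCoprime s hcop)⁻¹ : (ZMod k)ˣ) : ZMod k).val,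
      ZMod.val_lt _, 1, one_ne_zero,
      (neg_nonpos_of_nonneg (Int.natCast_nonneg d)).trans zero_le_one,
      (by exact_mod_cast hd), ?_⟩
    have key : ((((((ZMod.unitOfCoprime s hcop)⁻¹ : (ZMod k)ˣ) : ZMod k).val : ℤ) *
        ((s : ℤ) % (k : ℤ)) : ℤ) : ZMod k) = ((1 : ℤ) : ZMod k) := by
      push_cast
      rw [ZMod.natCast_val, ZMod.cast_id, ← ZMod.coe_unitOfCoprime s hcop,
        ← Units.val_mul, inv_mul_cancel, Units.val_one]
    exact (ZMod.intCast_eq_intCast_iff _ _ _).mp key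
  have hTmem : T < k ∧ ∃ ℓ : ℤ, ℓ ≠ 0 ∧ -(d : ℤ) ≤ ℓ ∧ ℓ ≤ (d : ℤ) ∧
      (T : ℤ) * ((s : ℤ) % (k : ℤ)) ≡ ℓ [ZMOD (k : ℤ)] := Nat.sInf_mem hne
  obtain ⟨hTk, ℓ, hℓ0, hℓ1, hℓ2, hcong⟩ := hTmem
  have hEC : ∀ i : ℕ, entryCount0 s k d i
      = ((Finset.range T).filter (fun j => (i + S * j) % k < S)).card := fun _ => rfl
  have hT0 : 0 < T := by
    rcases Nat.eq_zero_or_pos T with h0 | h; swap; · exact h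
    exfalso
    rw [h0] at hcong
    have hdvd : (k:ℤ) ∣ ℓ := by
      have hd2 := hcong.dvd
      simpa using hd2
    obtain ⟨c, hc⟩ := hdvd
    have hkZ : (0:ℤ) < (k:ℤ) := by exact_mod_cast hk
    have hdZ : (d:ℤ) < (k:ℤ) := by exact_mod_cast hdk
    rcases lt_trichotomy c 0 with h | h | h
    · have : ℓ ≤ -(k:ℤ) := by rw [hc]; nlinarith
      omega
    · exact hℓ0 (by rw [hc, h, mul_zero])
    · have : (k:ℤ) ≤ ℓ := by rw [hc]; nlinarith
      omega
  clear_value S T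
  obtain ⟨Q, ρ, hA, hρ0, hρk⟩ : ∃ Q ρ, Q * k + ρ = S * T ∧ 0 < ρ ∧ ρ < k := by
    refine ⟨S * T / k, S * T % k, by rw [mul_comm]; exact Nat.div_add_mod _ _, ?_,
      Nat.mod_lt _ (by omega)⟩
    rcases Nat.eq_zero_or_pos (S * T % k) with h0 | h; swap; · exact h
    exfalso
    have hdvd : k ∣ S * T := Nat.dvd_of_mod_eq_zero h0
    have hcop' : Nat.Coprime k S := by
      have h1 : Nat.gcd S k = Nat.gcd k s := by rw [hSdef]; exact (Nat.gcd_rec k s).symm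
      have h2 : Nat.Coprime S k := by
        unfold Nat.Coprime
        rw [h1, Nat.gcd_comm]
        exact hcop
      exact h2.symm
    have hkT : k ∣ T := hcop'.dvd_of_dvd_mul_left hdvd
    have := Nat.le_of_dvd hT0 hkT
    omega
  have hceil : (S * T + k - 1) / k = Q + 1 := by
    rw [← hA]
    have e : Q * k + ρ + k - 1 = ((ρ - 1) + k) + Q * k := by
      generalize Q * k = B
      omega
    rw [e, Nat.add_mul_div_right _ _ (by omega : 0 < k),
      Nat.add_div_right _ (by omega : 0 < k), Nat.div_eq_of_lt (by omega)]
    omega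
  have hkZ : (0:ℤ) < (k:ℤ) := by exact_mod_cast hk
  have hSZ : (0:ℤ) < (S:ℤ) := by exact_mod_cast hS0
  have hSkZ : (S:ℤ) < (k:ℤ) := by exact_mod_cast hSk
  have hρZ0 : (0:ℤ) < (ρ:ℤ) := by exact_mod_cast hρ0
  have hρZk : (ρ:ℤ) < (k:ℤ) := by exact_mod_cast hρk
  have hAZ : (Q:ℤ) * k + ρ = (S:ℤ) * T := by exact_mod_cast hA
  have hb : (S:ℤ) % k = (S:ℤ) := Int.emod_eq_of_lt (a := (S:ℤ)) (b := (k:ℤ)) (by omega) (by omega)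
  have ha : ((S:ℤ) - (S:ℤ) * T) % k = if ρ ≤ S then (S:ℤ) - ρ else (S:ℤ) - ρ + k := by
    have e1 : (S:ℤ) - (S:ℤ) * T = ((S:ℤ) - ρ) + (-(Q:ℤ)) * k := by linear_combination hAZ
    rw [e1, Int.add_mul_emod_self_right]
    by_cases h : ρ ≤ S
    · have hZ : (ρ:ℤ) ≤ (S:ℤ) := by exact_mod_cast h
      rw [if_pos h]
      exact Int.emod_eq_of_lt (a := (S:ℤ) - ρ) (b := (k:ℤ)) (by omega) (by omega)
    · have hZ : (S:ℤ) < (ρ:ℤ) := by exact_mod_cast Nat.lt_of_not_le h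
      rw [if_neg h]
      have e2 : ((S:ℤ) - ρ) % k = ((S:ℤ) - ρ + k) % k := by
        conv_lhs => rw [show (S:ℤ) - ρ = ((S:ℤ) - ρ + k) + (-1) * k from by ring]
        rw [Int.add_mul_emod_self_right]
      rw [e2]
      exact Int.emod_eq_of_lt (a := (S:ℤ) - ρ + k) (b := (k:ℤ)) (by omega) (by omega)
  intro i hi
  have hiZ : (i:ℤ) < k := by exact_mod_cast hi
  have hiZ0 : (0:ℤ) ≤ (i:ℤ) := Int.natCast_nonneg i
  have hcount : ((entryCount0 s k d i : ℕ) : ℤ)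
      = ((i : ℤ) + S * T - S) / k - ((i : ℤ) - S) / k := by
    rw [hEC i]; exact count_aux' S k hS0 hSk i T
  have hmain : ((i:ℤ) + S * T - S) / k = Q + (((i:ℤ) + ρ - S) / k) := by
    have e : (i:ℤ) + S * T - S = ((i:ℤ) + ρ - S) + (Q:ℤ) * k := by linear_combination -hAZ
    rw [e, Int.add_mul_ediv_right _ _ hkZ.ne']
    ring
  have hiS : ((i:ℤ) - S) / k = if (i:ℤ) < S then -1 else 0 := by
    split_ifs with h
    · exact ediv_neg_one' (k:ℤ) ((i:ℤ) - S) hkZ (by omega) (by omega)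
    · exact Int.ediv_eq_zero_of_lt (a := (i:ℤ) - S) (b := (k:ℤ)) (by omega) (by omega)
  have hmid : ((i:ℤ) + ρ - S) / k
      = if (i:ℤ) + ρ < S then -1 else if (i:ℤ) + ρ - S < k then 0 else 1 := by
    split_ifs with h1 h2
    · exact ediv_neg_one' (k:ℤ) ((i:ℤ) + ρ - S) hkZ (by omega) (by omega)
    · exact Int.ediv_eq_zero_of_lt (a := (i:ℤ) + ρ - S) (b := (k:ℤ)) (by omega) (by omega)
    · exact ediv_one'' (k:ℤ) ((i:ℤ) + ρ - S) hkZ (by omega) (by omega)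
  rw [hmain, hmid, hiS] at hcount
  have hsk_cast : (s:ℤ) % (k:ℤ) = ((S:ℕ):ℤ) := by
    rw [hSdef]; exact (Int.natCast_mod s k).symm
  constructor
  · intro hmem
    simp only [cycMemCO] at hmem
    rw [hsk_cast, ha, hb] at hmem
    rw [hceil]
    by_cases h : ρ ≤ S
    · have hZ : (ρ:ℤ) ≤ (S:ℤ) := by exact_mod_cast h
      rw [if_pos h] at hmem
      rw [if_pos (by omega : (S:ℤ) - ρ ≤ (S:ℤ))] at hmem
      obtain ⟨hm1, hm2⟩ := hmem
      split_ifs at hcount <;> omega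
    · have hZ : (S:ℤ) < (ρ:ℤ) := by exact_mod_cast Nat.lt_of_not_le h
      rw [if_neg h] at hmem
      rw [if_neg (by omega : ¬ ((S:ℤ) - ρ + k ≤ (S:ℤ)))] at hmem
      rcases hmem with hm | hm <;> split_ifs at hcount <;> omega
  · intro hmem
    simp only [cycMemCO] at hmem
    rw [hsk_cast, ha, hb] at hmem
    rw [hceil]
    by_cases h : ρ ≤ S
    · have hZ : (ρ:ℤ) ≤ (S:ℤ) := by exact_mod_cast h
      rw [if_pos h] at hmem
      rw [if_neg (by omega : ¬ ((S:ℤ) ≤ (S:ℤ) - ρ))] at hmem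
      rcases hmem with hm | hm <;> split_ifs at hcount <;> omega
    · have hZ : (S:ℤ) < (ρ:ℤ) := by exact_mod_cast Nat.lt_of_not_le h
      rw [if_neg h] at hmem
      rw [if_pos (by omega : (S:ℤ) ≤ (S:ℤ) - ρ + k)] at hmem
      obtain ⟨hm1, hm2⟩ := hmem
      split_ifs at hcount <;> omega
end
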